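/- arXiv:2210.04730 — 4 statements merged into one kernel-verified Lean document; each statement's English description precedes it below -/
import Mathlib

section
/- Let I ⊂ ℝ be a bounded connected open interval and p ∈ [1, +∞). Then the strong L^p(I)-closure of L^p_R(I) equals {g + a : g ∈ L^p(I) integer-valued a.e., a ∈ ℝ}, and this set equals L^p_ℤ(I). -/
open MeasureTheory Filter Topology Set
open scoped ENNReal NNReal

noncomputable section

/-- `x` is a Lebesgue point of `V : ℝ → ℝ`. -/
def IsLebesguePoint1 (V : ℝ → ℝ) (x : ℝ) : Prop :=
  Tendsto (fun r : ℝ => ⨍ y in Metric.ball x r, |V y - V x| ∂volume) (𝓝[>] 0) (𝓝 0)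

/-- `V ∈ L^p_R(I)` for `I = (a,b)`: on `(a,b)`, `V` is the sum of a constant and an
integer-valued step function subordinate to a finite partition of `(a,b)` into intervals. -/
def IsIntegerStep (a b : ℝ) (V : ℝ → ℝ) : Prop :=
  ∃ (c : ℝ) (k : ℕ) (t : Fin (k + 1) → ℝ) (z : Fin k → ℤ),
    Monotone t ∧ t 0 = a ∧ t (Fin.last k) = b ∧
    ∀ j : Fin k, ∀ x ∈ Ioo (t j.castSucc) (t j.succ), V x = c + z j

/-- `V ∈ L^p_ℤ(I)` for `I = (a,b)`: for every `x₀ ∈ I` and a.e.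
`r ∈ (0, dist(x₀, ∂I))`, both `x₀ + r` and `x₀ - r` are Lebesgue points of `V` and
`V(x₀+r) - V(x₀-r) ∈ ℤ`. -/
def HasIntegerJumps (a b : ℝ) (V : ℝ → ℝ) : Prop :=
  ∀ x₀ ∈ Ioo a b, ∀ᵐ r ∂(volume.restrict (Ioo (0 : ℝ) (min (x₀ - a) (b - x₀)))),
    IsLebesguePoint1 V (x₀ + r) ∧ IsLebesguePoint1 V (x₀ - r) ∧
    ∃ z : ℤ, V (x₀ + r) - V (x₀ - r) = z

/-- The limit of a sequence of integers is an integer. -/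
lemma exists_int_of_tendsto {u : ℕ → ℝ} {x : ℝ} (h : Tendsto u atTop (𝓝 x))
    (hu : ∀ n, ∃ z : ℤ, u n = z) : ∃ z : ℤ, x = z := by
  have hcl : IsClosed (range ((↑) : ℤ → ℝ)) := Int.isClosedEmbedding_coe_real.isClosed_range
  have hx : x ∈ range ((↑) : ℤ → ℝ) := by
    apply hcl.mem_of_tendsto h
    filter_upwards with n
    obtain ⟨z, hz⟩ := hu n
    exact ⟨z, hz.symm⟩
  obtain ⟨z, hz⟩ := hx
  exact ⟨z, hz.symm⟩

/-- both coordinates a.e. for a product measure. -/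
lemma ae_pair {μ ν : Measure ℝ} [SFinite μ] [SFinite ν] {P Q : ℝ → Prop}
    (h : ∀ᵐ x ∂μ, P x) (h' : ∀ᵐ y ∂ν, Q y) : ∀ᵐ q ∂μ.prod ν, P q.1 ∧ Q q.2 := by
  rw [ae_iff] at h h' ⊢
  have hsub : {q : ℝ × ℝ | ¬(P q.1 ∧ Q q.2)} ⊆
      ({x | ¬ P x} ×ˢ (univ : Set ℝ)) ∪ ((univ : Set ℝ) ×ˢ {y | ¬ Q y}) := by
    intro q hq
    simp only [mem_setOf_eq, not_and_or] at hq
    rcases hq with hq | hq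
    · exact Or.inl ⟨hq, mem_univ _⟩
    · exact Or.inr ⟨mem_univ _, hq⟩
  refine measure_mono_null hsub (measure_union_null ?_ ?_)
  · rw [Measure.prod_prod, h, zero_mul]
  · rw [Measure.prod_prod, h', mul_zero]

section Main

variable {a b : ℝ}

/-- An integer step function has a measurable representative and integer values (up to a
constant) a.e. on `(a, b)`. -/
lemma IsIntegerStep.exists_rep {W : ℝ → ℝ} (h : IsIntegerStep a b W) :
    ∃ (c : ℝ) (f : ℝ → ℝ), Measurable f ∧
      (∀ᵐ x ∂(volume.restrict (Ioo a b)), W x = f x ∧ ∃ z : ℤ, W x = c + z) := by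
  obtain ⟨c, k, t, z, hmono, ht0, htl, hW⟩ := h
  refine ⟨c, fun x => c + ∑ j : Fin k,
    (Ioo (t j.castSucc) (t j.succ)).indicator (fun _ => (z j : ℝ)) x, ?_, ?_⟩
  · apply measurable_const.add
    apply Finset.measurable_sum
    intro j _
    exact (measurable_const.indicator measurableSet_Ioo)
  · have hnull : (volume : Measure ℝ) (range t) = 0 := (Set.finite_range t).measure_zero _
    have hae : ∀ᵐ x ∂(volume : Measure ℝ), x ∉ range t := by
      rw [ae_iff]
      simpa only [not_not, setOf_mem_eq] using hnull
    have hae' : ∀ᵐ x ∂(volume.restrict (Ioo a b)), x ∉ range t := ae_restrict_of_ae hae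
    rw [ae_restrict_iff' measurableSet_Ioo] at hae' ⊢
    filter_upwards [hae'] with x hxr hx
    have hxr := hxr hx
    -- find the interval containing x
    have h0S : t 0 < x := by rw [ht0]; exact hx.1
    classical
    set S : Finset (Fin (k+1)) := Finset.univ.filter (fun i => t i < x) with hS
    have hS0 : (0 : Fin (k+1)) ∈ S := by simp [hS, h0S]
    have hSne : S.Nonempty := ⟨0, hS0⟩
    set j₀ := S.max' hSne with hj₀
    have htj₀ : t j₀ < x := by
      have := S.max'_mem hSne
      simpa [hS] using this
    have hj₀ne : j₀ ≠ Fin.last k := by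
      intro heq
      rw [heq, htl] at htj₀
      exact absurd hx.2 (not_lt.2 htj₀.le)
    have hj₀lt : (j₀ : ℕ) < k := Fin.val_lt_last hj₀ne
    set j : Fin k := ⟨(j₀ : ℕ), hj₀lt⟩ with hj
    have hcast : j.castSucc = j₀ := by
      apply Fin.ext
      simp [hj]
    have hsucc : x < t j.succ := by
      rcases lt_trichotomy x (t j.succ) with h1 | h1 | h1
      · exact h1
      · exact absurd ⟨j.succ, h1.symm⟩ hxr
      · exfalso
        have hmem : j.succ ∈ S := by simp [hS, h1]
        have hle := S.le_max' _ hmem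
        rw [← hj₀] at hle
        have : (j₀ : ℕ) + 1 ≤ (j₀ : ℕ) := by
          have := Fin.le_def.1 hle
          simpa [hj] using this
        omega
    have hxmem : x ∈ Ioo (t j.castSucc) (t j.succ) := by
      rw [hcast]; exact ⟨htj₀, hsucc⟩
    have hWx := hW j x hxmem
    constructor
    · rw [hWx]
      congr 1
      rw [Finset.sum_eq_single j]
      · simp [indicator_of_mem hxmem]
      · intro i _ hij
        apply indicator_of_notMem
        intro hxi
        rcases hij.lt_or_gt with hlt | hlt
        · have hv : (i : ℕ) < (j : ℕ) := Fin.lt_def.1 hlt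
          have hle : (i.succ : Fin (k+1)) ≤ j.castSucc := by
            rw [Fin.le_def]
            show (i : ℕ) + 1 ≤ (j : ℕ)
            omega
          have := hmono hle
          linarith [hxi.2, hxmem.1]
        · have hv : (j : ℕ) < (i : ℕ) := Fin.lt_def.1 hlt
          have hle : (j.succ : Fin (k+1)) ≤ i.castSucc := by
            rw [Fin.le_def]
            show (j : ℕ) + 1 ≤ (i : ℕ)
            omega
          have := hmono hle
          linarith [hxmem.2, hxi.1]
      · intro hj'
        exact absurd (Finset.mem_univ j) hj'
    · exact ⟨z j, hWx⟩

/-- Key lemma: a.e. integer pairwise differences give a decomposition `V = g + c`. -/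
lemma key_decomp (hab : a < b) {p : ℝ} (hp : 1 ≤ p) {V : ℝ → ℝ}
    (hV : MemLp V (ENNReal.ofReal p) (volume.restrict (Ioo a b)))
    (hpair : ∀ᵐ q ∂((volume.restrict (Ioo a b)).prod (volume.restrict (Ioo a b))),
      ∃ z : ℤ, V q.1 - V q.2 = z) :
    ∃ (g : ℝ → ℝ) (c : ℝ), MemLp g (ENNReal.ofReal p) (volume.restrict (Ioo a b)) ∧
        (∀ᵐ x ∂volume.restrict (Ioo a b), ∃ z : ℤ, g x = z) ∧
        (∀ᵐ x ∂volume.restrict (Ioo a b), V x = g x + c) := by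
  haveI : IsFiniteMeasure (volume.restrict (Ioo a b)) :=
    ⟨by rw [Measure.restrict_apply_univ]; exact measure_Ioo_lt_top⟩
  have hne : (volume.restrict (Ioo a b)) ≠ 0 := by
    intro h0
    have h1 : (volume.restrict (Ioo a b)) (Ioo a b) = 0 := by rw [h0]; rfl
    rw [Measure.restrict_apply_self, Real.volume_Ioo] at h1
    exact absurd h1 (by simp [hab])
  haveI : NeBot (ae (volume.restrict (Ioo a b))) := ae_neBot.2 hne
  have h2 := Measure.ae_ae_of_ae_prod hpair
  obtain ⟨x₀, hx₀⟩ := h2.exists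
  refine ⟨fun y => V y - V x₀, V x₀, hV.sub (memLp_const _), ?_, ?_⟩
  · filter_upwards [hx₀] with y hy
    obtain ⟨z, hz⟩ := hy
    exact ⟨-z, by push_cast; linarith⟩
  · filter_upwards with y
    ring

/-- Transfer Lebesgue point property from a global representative to `V`. -/
lemma isLebesguePoint1_of_rep {V f : ℝ → ℝ} {x : ℝ} (hx : x ∈ Ioo a b)
    (hVf : V x = f x)
    (hleb : Tendsto (fun s => ⨍ y in Metric.closedBall x s, ‖f y - f x‖ ∂volume)
      (𝓝[>] 0) (𝓝 0))
    (hae : ∀ᵐ y ∂(volume.restrict (Ioo a b)), V y = f y) : IsLebesguePoint1 V x := by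
  have hd0 : 0 < min (x - a) (b - x) := lt_min (by linarith [hx.1]) (by linarith [hx.2])
  apply Tendsto.congr' _ hleb
  filter_upwards [Ioo_mem_nhdsGT_of_mem (Set.mem_Ico.2 ⟨le_rfl, hd0⟩)] with s hs
  have hsub : Ioo (x - s) (x + s) ⊆ Ioo a b := by
    intro y hy
    have h1 : s < x - a := lt_of_lt_of_le hs.2 (min_le_left _ _)
    have h2 : s < b - x := lt_of_lt_of_le hs.2 (min_le_right _ _)
    exact ⟨by linarith [hy.1], by linarith [hy.2]⟩
  rw [Real.closedBall_eq_Icc, Real.ball_eq_Ioo, setAverage_eq, setAverage_eq,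
    Real.volume_real_Icc, Real.volume_real_Ioo]
  congr 1
  rw [integral_Icc_eq_integral_Ioo]
  apply integral_congr_ae
  filter_upwards [ae_restrict_of_ae_restrict_of_subset hsub hae] with y hy
  rw [hy, hVf, Real.norm_eq_abs]

/-- Decomposition implies integer jumps. -/
lemma decomp_to_jumps (hab : a < b) {p : ℝ} (hp : 1 ≤ p) {V : ℝ → ℝ}
    (hV : MemLp V (ENNReal.ofReal p) (volume.restrict (Ioo a b)))
    (h : ∃ (g : ℝ → ℝ) (c : ℝ), MemLp g (ENNReal.ofReal p) (volume.restrict (Ioo a b)) ∧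
        (∀ᵐ x ∂volume.restrict (Ioo a b), ∃ z : ℤ, g x = z) ∧
        (∀ᵐ x ∂volume.restrict (Ioo a b), V x = g x + c)) :
    HasIntegerJumps a b V := by
  haveI : IsFiniteMeasure (volume.restrict (Ioo a b)) :=
    ⟨by rw [Measure.restrict_apply_univ]; exact measure_Ioo_lt_top⟩
  obtain ⟨g, c, hg, hgint, hVg⟩ := h
  set G := hV.1.mk V with hGdef
  have hVG : V =ᵐ[volume.restrict (Ioo a b)] G := hV.1.ae_eq_mk
  set f := (Ioo a b).indicator G with hfdef
  have hVf : ∀ᵐ y ∂(volume.restrict (Ioo a b)), V y = f y := by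
    filter_upwards [hVG, ae_restrict_mem measurableSet_Ioo] with y hy hym
    rw [hy, hfdef, indicator_of_mem hym]
  -- integrability of the representative
  have hmemG : MemLp G (ENNReal.ofReal p) (volume.restrict (Ioo a b)) :=
    (memLp_congr_ae hVG).1 hV
  have hint : Integrable f volume := by
    rw [hfdef, integrable_indicator_iff measurableSet_Ioo]
    exact memLp_one_iff_integrable.1 (hmemG.mono_exponent
      (by simpa using ENNReal.ofReal_le_ofReal hp))
  have hleb : ∀ᵐ x ∂(volume : Measure ℝ),
      Tendsto (fun s => ⨍ y in Metric.closedBall x s, ‖f y - f x‖ ∂volume)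
        (𝓝[>] 0) (𝓝 0) := by
    filter_upwards [(Besicovitch.vitaliFamily (volume : Measure ℝ)).ae_tendsto_average_norm_sub
      hint.locallyIntegrable] with x hx
    exact hx.comp (Besicovitch.tendsto_filterAt _ _)
  -- the good set
  have hgood : ∀ᵐ x ∂(volume : Measure ℝ), x ∈ Ioo a b →
      (IsLebesguePoint1 V x ∧ ∃ z : ℤ, V x = z + c) := by
    have hrest : ∀ᵐ x ∂(volume : Measure ℝ), x ∈ Ioo a b → (V x = f x ∧ ∃ z : ℤ, V x = z + c) := by
      rw [← ae_restrict_iff' measurableSet_Ioo]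
      filter_upwards [hVf, hgint, hVg] with x h1 h2 h3
      obtain ⟨z, hz⟩ := h2
      exact ⟨h1, z, by rw [h3, hz]⟩
    filter_upwards [hleb, hrest] with x h1 h2 hxm
    obtain ⟨hVfx, z, hz⟩ := h2 hxm
    exact ⟨isLebesguePoint1_of_rep hxm hVfx h1 hVf, z, hz⟩
  intro x₀ hx₀
  have hadd : ∀ᵐ r ∂(volume : Measure ℝ), x₀ + r ∈ Ioo a b →
      (IsLebesguePoint1 V (x₀ + r) ∧ ∃ z : ℤ, V (x₀ + r) = z + c) :=
    (measurePreserving_add_left (volume : Measure ℝ) x₀).quasiMeasurePreserving.ae hgood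
  have hsubm : ∀ᵐ r ∂(volume : Measure ℝ), x₀ - r ∈ Ioo a b →
      (IsLebesguePoint1 V (x₀ - r) ∧ ∃ z : ℤ, V (x₀ - r) = z + c) := by
    have hmp : MeasurePreserving (fun r : ℝ => x₀ - r) volume volume := by
      have := (measurePreserving_add_left (volume : Measure ℝ) x₀).comp
        (Measure.measurePreserving_neg (volume : Measure ℝ))
      simpa [Function.comp_def, sub_eq_add_neg] using this
    exact hmp.quasiMeasurePreserving.ae hgood
  filter_upwards [ae_restrict_of_ae hadd, ae_restrict_of_ae hsubm,
    ae_restrict_mem measurableSet_Ioo] with r h1 h2 hr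
  have hrm : 0 < r ∧ r < min (x₀ - a) (b - x₀) := ⟨hr.1, hr.2⟩
  have hr1 : r < x₀ - a := lt_of_lt_of_le hrm.2 (min_le_left _ _)
  have hr2 : r < b - x₀ := lt_of_lt_of_le hrm.2 (min_le_right _ _)
  have hmem1 : x₀ + r ∈ Ioo a b := ⟨by linarith [hx₀.1, hrm.1], by linarith⟩
  have hmem2 : x₀ - r ∈ Ioo a b := ⟨by linarith, by linarith [hx₀.2, hrm.1]⟩
  obtain ⟨hL1, z1, hz1⟩ := h1 hmem1
  obtain ⟨hL2, z2, hz2⟩ := h2 hmem2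
  exact ⟨hL1, hL2, z1 - z2, by rw [hz1, hz2]; push_cast; ring⟩

/-- Integer jumps imply a.e. pairwise integer differences. -/
lemma jumps_to_pair (hab : a < b) {V : ℝ → ℝ}
    (hVm : AEStronglyMeasurable V (volume.restrict (Ioo a b)))
    (h : HasIntegerJumps a b V) :
    ∀ᵐ q ∂((volume.restrict (Ioo a b)).prod (volume.restrict (Ioo a b))),
      ∃ z : ℤ, V q.1 - V q.2 = z := by
  set G := hVm.mk V with hGdef
  have hGm : Measurable G := hVm.stronglyMeasurable_mk.measurable
  have hVG : V =ᵐ[volume.restrict (Ioo a b)] G := hVm.ae_eq_mk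
  have hVGi : ∀ᵐ y ∂(volume : Measure ℝ), y ∈ Ioo a b → V y = G y :=
    (ae_restrict_iff' measurableSet_Ioo).1 hVG
  have hrange : MeasurableSet (range ((↑) : ℤ → ℝ)) :=
    Int.isClosedEmbedding_coe_real.isClosed_range.measurableSet
  have hmpneg : ∀ x₀ : ℝ, MeasurePreserving (fun r : ℝ => x₀ - r) volume volume := by
    intro x₀
    have := (measurePreserving_add_left (volume : Measure ℝ) x₀).comp
      (Measure.measurePreserving_neg (volume : Measure ℝ))
    simpa [Function.comp_def, sub_eq_add_neg] using this
  -- slice-wise nullity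
  have hslice : ∀ x₀ ∈ Ioo a b,
      volume ({r : ℝ | ¬ ∃ z : ℤ, G (x₀ + r) - G (x₀ - r) = z}
        ∩ Ioo 0 (min (x₀ - a) (b - x₀))) = 0 := by
    intro x₀ hx₀
    have hplus : ∀ᵐ r ∂(volume : Measure ℝ), x₀ + r ∈ Ioo a b → V (x₀ + r) = G (x₀ + r) :=
      (measurePreserving_add_left (volume : Measure ℝ) x₀).quasiMeasurePreserving.ae hVGi
    have hminus : ∀ᵐ r ∂(volume : Measure ℝ), x₀ - r ∈ Ioo a b → V (x₀ - r) = G (x₀ - r) :=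
      (hmpneg x₀).quasiMeasurePreserving.ae hVGi
    have hae : ∀ᵐ r ∂(volume.restrict (Ioo 0 (min (x₀ - a) (b - x₀)))),
        ∃ z : ℤ, G (x₀ + r) - G (x₀ - r) = z := by
      filter_upwards [h x₀ hx₀, ae_restrict_of_ae hplus, ae_restrict_of_ae hminus,
        ae_restrict_mem measurableSet_Ioo] with r hj ha hb hr
      obtain ⟨-, -, z, hz⟩ := hj
      have hr1 : r < x₀ - a := lt_of_lt_of_le hr.2 (min_le_left _ _)
      have hr2 : r < b - x₀ := lt_of_lt_of_le hr.2 (min_le_right _ _)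
      have hm1 : x₀ + r ∈ Ioo a b := ⟨by linarith [hx₀.1, hr.1], by linarith⟩
      have hm2 : x₀ - r ∈ Ioo a b := ⟨by linarith, by linarith [hx₀.2, hr.1]⟩
      exact ⟨z, by rw [← ha hm1, ← hb hm2]; exact hz⟩
    have hms : MeasurableSet {r : ℝ | ¬ ∃ z : ℤ, G (x₀ + r) - G (x₀ - r) = z} := by
      have hmeas : Measurable (fun r : ℝ => G (x₀ + r) - G (x₀ - r)) :=
        (hGm.comp (measurable_const.add measurable_id)).sub
          (hGm.comp (measurable_const.sub measurable_id))
      have heq : {r : ℝ | ∃ z : ℤ, G (x₀ + r) - G (x₀ - r) = (z : ℝ)} =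
          (fun r => G (x₀ + r) - G (x₀ - r)) ⁻¹' (range ((↑) : ℤ → ℝ)) := by
        ext r
        simp only [mem_setOf_eq, mem_preimage, mem_range]
        exact ⟨fun ⟨z, hz⟩ => ⟨z, hz.symm⟩, fun ⟨z, hz⟩ => ⟨z, hz.symm⟩⟩
      have : MeasurableSet {r : ℝ | ∃ z : ℤ, G (x₀ + r) - G (x₀ - r) = (z : ℝ)} := by
        rw [heq]; exact hmeas hrange
      exact this.compl
    rw [ae_iff] at hae
    rwa [Measure.restrict_apply hms] at hae
  -- null set in the plane
  set S : Set (ℝ × ℝ) := {q | (q.1 ∈ Ioo a b ∧ q.2 ∈ Ioo 0 (min (q.1 - a) (b - q.1))) ∧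
    ¬ ∃ z : ℤ, G (q.1 + q.2) - G (q.1 - q.2) = z} with hSdef
  have hGq : Measurable (fun q : ℝ × ℝ => G (q.1 + q.2) - G (q.1 - q.2)) :=
    (hGm.comp (measurable_fst.add measurable_snd)).sub
      (hGm.comp (measurable_fst.sub measurable_snd))
  have hzset : MeasurableSet {q : ℝ × ℝ | ∃ z : ℤ, G (q.1 + q.2) - G (q.1 - q.2) = (z : ℝ)} := by
    have heq : {q : ℝ × ℝ | ∃ z : ℤ, G (q.1 + q.2) - G (q.1 - q.2) = (z : ℝ)} =
        (fun q : ℝ × ℝ => G (q.1 + q.2) - G (q.1 - q.2)) ⁻¹' (range ((↑) : ℤ → ℝ)) := by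
      ext q
      simp only [mem_setOf_eq, mem_preimage, mem_range]
      exact ⟨fun ⟨z, hz⟩ => ⟨z, hz.symm⟩, fun ⟨z, hz⟩ => ⟨z, hz.symm⟩⟩
    rw [heq]; exact hGq hrange
  have hSm : MeasurableSet S := by
    refine MeasurableSet.inter (MeasurableSet.inter ?_ ?_) hzset.compl
    · exact measurable_fst measurableSet_Ioo
    · have h1 : MeasurableSet {q : ℝ × ℝ | 0 < q.2} := measurableSet_lt measurable_const measurable_snd
      have h2 : MeasurableSet {q : ℝ × ℝ | q.2 < min (q.1 - a) (b - q.1)} :=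
        measurableSet_lt measurable_snd
          ((measurable_fst.sub measurable_const).min (measurable_const.sub measurable_fst))
      exact h1.inter h2
  have hS0 : (volume : Measure (ℝ × ℝ)) S = 0 := by
    rw [Measure.volume_eq_prod, Measure.prod_apply hSm]
    have hz : ∀ x : ℝ, volume (Prod.mk x ⁻¹' S) = 0 := by
      intro x
      by_cases hx : x ∈ Ioo a b
      · refine measure_mono_null (fun r hr => ?_) (hslice x hx)
        exact ⟨hr.2, hr.1.2⟩
      · have he : Prod.mk x ⁻¹' S = ∅ := by
          ext r
          simp only [mem_preimage, mem_empty_iff_false, iff_false]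
          intro hr
          exact hx hr.1.1
        simp [he]
    rw [lintegral_congr hz]
    simp
  -- linear image
  set φ : (ℝ × ℝ) →ₗ[ℝ] (ℝ × ℝ) := (LinearMap.fst ℝ ℝ ℝ + LinearMap.snd ℝ ℝ ℝ).prod
    (LinearMap.fst ℝ ℝ ℝ - LinearMap.snd ℝ ℝ ℝ) with hφdef
  have hφapp : ∀ q : ℝ × ℝ, φ q = (q.1 + q.2, q.1 - q.2) := by
    intro q
    simp [hφdef, LinearMap.prod_apply]
  have himg : (volume : Measure (ℝ × ℝ)) (⇑φ '' S) = 0 := by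
    rw [Measure.addHaar_image_linearMap, hS0, mul_zero]
  set N : Set (ℝ × ℝ) := {q | (q.1 ∈ Ioo a b ∧ q.2 ∈ Ioo a b) ∧ q.2 < q.1 ∧
    ¬ ∃ z : ℤ, G q.1 - G q.2 = z} with hNdef
  have hNsub : N ⊆ ⇑φ '' S := by
    rintro ⟨u, v⟩ ⟨⟨hu, hv⟩, hvu, hz⟩
    have e1 : (u + v) / 2 + (u - v) / 2 = u := by ring
    have e2 : (u + v) / 2 - (u - v) / 2 = v := by ring
    refine ⟨((u + v) / 2, (u - v) / 2), ⟨⟨⟨?_, ?_⟩, ?_, ?_⟩, ?_⟩, ?_⟩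
    · have := hu.1; have := hv.1; simp only; linarith
    · have := hu.2; have := hv.2; simp only; linarith
    · simp only; linarith
    · have h1 := hu.2; have h2 := hv.1
      apply lt_min
      · simp only; linarith
      · simp only; linarith
    · simp only [e1, e2]
      exact hz
    · rw [hφapp]
      simp only [e1, e2]
  have hN0 : (volume : Measure (ℝ × ℝ)) N = 0 := measure_mono_null hNsub himg
  have hzset2 : MeasurableSet {q : ℝ × ℝ | ∃ z : ℤ, G q.1 - G q.2 = (z : ℝ)} := by
    have heq : {q : ℝ × ℝ | ∃ z : ℤ, G q.1 - G q.2 = (z : ℝ)} =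
        (fun q : ℝ × ℝ => G q.1 - G q.2) ⁻¹' (range ((↑) : ℤ → ℝ)) := by
      ext q
      simp only [mem_setOf_eq, mem_preimage, mem_range]
      exact ⟨fun ⟨z, hz⟩ => ⟨z, hz.symm⟩, fun ⟨z, hz⟩ => ⟨z, hz.symm⟩⟩
    rw [heq]
    exact ((hGm.comp measurable_fst).sub (hGm.comp measurable_snd)) hrange
  have hNm : MeasurableSet N := by
    refine MeasurableSet.inter (MeasurableSet.inter ?_ ?_)
      (MeasurableSet.inter (measurableSet_lt measurable_snd measurable_fst) hzset2.compl)
    · exact measurable_fst measurableSet_Ioo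
    · exact measurable_snd measurableSet_Ioo
  have hswap0 : (volume : Measure (ℝ × ℝ)) (Prod.swap ⁻¹' N) = 0 := by
    have hmap : (Measure.map Prod.swap (volume : Measure (ℝ × ℝ))) N =
        (volume : Measure (ℝ × ℝ)) (Prod.swap ⁻¹' N) :=
      Measure.map_apply measurable_swap hNm
    rw [← hmap, Measure.volume_eq_prod, Measure.prod_swap, ← Measure.volume_eq_prod]
    exact hN0
  have hM : (volume : Measure (ℝ × ℝ)) {q : ℝ × ℝ | (q.1 ∈ Ioo a b ∧ q.2 ∈ Ioo a b) ∧
      ¬ ∃ z : ℤ, G q.1 - G q.2 = z} = 0 := by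
    refine measure_mono_null ?_ (measure_union_null hN0 hswap0)
    rintro ⟨u, v⟩ ⟨⟨hu, hv⟩, hz⟩
    rcases lt_trichotomy v u with hlt | heq | hgt
    · exact Or.inl ⟨⟨hu, hv⟩, hlt, hz⟩
    · exfalso
      apply hz
      exact ⟨0, by rw [heq]; simp⟩
    · refine Or.inr ⟨⟨hv, hu⟩, hgt, fun hex => hz ?_⟩
      obtain ⟨z, hzz⟩ := hex
      refine ⟨-z, ?_⟩
      simp only [Prod.swap_prod_mk] at hzz
      simp only at hzz ⊢
      push_cast
      linarith
  -- back to the restricted product measure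
  rw [Measure.prod_restrict, ae_restrict_iff' (measurableSet_Ioo.prod measurableSet_Ioo)]
  have hGae : ∀ᵐ q ∂((volume : Measure ℝ).prod volume),
      q ∈ (Ioo a b) ×ˢ (Ioo a b) → ∃ z : ℤ, G q.1 - G q.2 = z := by
    rw [ae_iff]
    rw [← Measure.volume_eq_prod]
    refine measure_mono_null (fun q hq => ?_) hM
    simp only [mem_setOf_eq, not_forall] at hq
    obtain ⟨hq1, hq2⟩ := hq
    rw [Set.mem_prod] at hq1
    exact ⟨hq1, hq2⟩
  filter_upwards [hGae, ae_pair hVGi hVGi] with q h1 h2 hq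
  rw [Set.mem_prod] at hq
  obtain ⟨z, hz⟩ := h1 (Set.mem_prod.2 hq)
  exact ⟨z, by rw [h2.1 hq.1, h2.2 hq.2]; exact hz⟩

lemma exists_pos_mul_le {C : ℝ≥0∞} (hC : C ≠ ⊤) {ε : ℝ≥0∞} (hε : ε ≠ 0) :
    ∃ δ : ℝ, 0 < δ ∧ ENNReal.ofReal δ * C ≤ ε := by
  rcases eq_or_ne C 0 with h | h
  · exact ⟨1, one_pos, by simp [h]⟩
  · set η := min ε 1 with hη
    have hη0 : η ≠ 0 := by
      have h1 : (0:ℝ≥0∞) < ε := pos_iff_ne_zero.2 hε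
      exact (lt_min h1 one_pos).ne' 
    have hηt : η ≠ ⊤ := ne_top_of_le_ne_top ENNReal.one_ne_top (min_le_right _ _)
    have hdivt : η / C ≠ ⊤ := (ENNReal.div_lt_top hηt h).ne
    refine ⟨(η / C).toReal, ENNReal.toReal_pos ?_ hdivt, ?_⟩
    · simp [ENNReal.div_eq_zero_iff, hη0, hC]
    · rw [ENNReal.ofReal_toReal hdivt, ENNReal.div_mul_cancel h hC]
      exact min_le_left _ _

/-- The quantitative approximation step: an integer-valued `L^p` function plus a constant can be
approximated by integer step functions. -/
lemma exists_step_approx (hab : a < b) {p : ℝ} (hp : 1 ≤ p) {g : ℝ → ℝ} (c : ℝ)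
    (hg : MemLp g (ENNReal.ofReal p) (volume.restrict (Ioo a b)))
    (hgint : ∀ᵐ x ∂(volume.restrict (Ioo a b)), ∃ z : ℤ, g x = z)
    {ε : ℝ≥0∞} (hε : ε ≠ 0) :
    ∃ Wf : ℝ → ℝ, IsIntegerStep a b Wf ∧
      eLpNorm (fun x => Wf x - (g x + c)) (ENNReal.ofReal p)
        (volume.restrict (Ioo a b)) ≤ ε := by
  haveI : IsFiniteMeasure (volume.restrict (Ioo a b)) :=
    ⟨by rw [Measure.restrict_apply_univ]; exact measure_Ioo_lt_top⟩
  have hμ0 : (volume.restrict (Ioo a b)) ≠ 0 := by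
    intro h0
    have h1 : (volume.restrict (Ioo a b)) (Ioo a b) = 0 := by rw [h0]; rfl
    rw [Measure.restrict_apply_self, Real.volume_Ioo] at h1
    exact absurd h1 (by simp [hab])
  set q := ENNReal.ofReal p with hqdef
  have hq0 : q ≠ 0 := by
    rw [hqdef]
    simp only [ne_eq, ENNReal.ofReal_eq_zero, not_le]
    linarith
  have hqt : q ≠ ⊤ := ENNReal.ofReal_ne_top
  have hq1 : (1 : ℝ≥0∞) ≤ q := by
    rw [hqdef, ← ENNReal.ofReal_one]
    exact ENNReal.ofReal_le_ofReal hp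
  set ε1 := min (ε / 3) 1 with hε1def
  have hε10 : ε1 ≠ 0 := by
    have h1 : ε / 3 ≠ 0 := by simp [ENNReal.div_eq_zero_iff, hε]
    exact (lt_min (pos_iff_ne_zero.2 h1) one_pos).ne' 
  -- measurable representative, extended by 0
  have hgmm : StronglyMeasurable (hg.1.mk g) := hg.1.stronglyMeasurable_mk
  have hgeq : g =ᵐ[volume.restrict (Ioo a b)] hg.1.mk g := hg.1.ae_eq_mk
  set g₀ := (Ioo a b).indicator (hg.1.mk g) with hg₀def
  have hg₀m : Measurable g₀ := hgmm.measurable.indicator measurableSet_Ioo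
  have hg₀mem : MemLp g₀ q volume :=
    (memLp_indicator_iff_restrict measurableSet_Ioo).2 ((memLp_congr_ae hgeq).1 hg)
  obtain ⟨u, hucs, huclose, hucont, -⟩ :=
    hg₀mem.exists_hasCompactSupport_eLpNorm_sub_le hqt hε10
  have huu : UniformContinuous u := hucs.uniformContinuous_of_continuous hucont
  -- the measure constant
  have hCne : (((volume.restrict (Ioo a b)) Set.univ) ^ (1 / q.toReal)) ≠ ⊤ := by
    apply ENNReal.rpow_ne_top_of_nonneg
    · have : q.toReal = p := ENNReal.toReal_ofReal (by linarith)
      rw [this]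
      positivity
    · rw [Measure.restrict_apply_univ]
      exact measure_Ioo_lt_top.ne
  obtain ⟨δc, hδc0, hδc⟩ := exists_pos_mul_le hCne hε10
  obtain ⟨δ, hδ0, hδ⟩ := Metric.uniformContinuous_iff.1 huu (δc / 2) (by linarith)
  obtain ⟨n, hn⟩ := exists_nat_gt ((b - a) / δ)
  have hn1 : (0:ℝ) < (n : ℝ) + 1 := by positivity
  set h0 := (b - a) / ((n : ℝ) + 1) with hh0
  have hh0pos : 0 < h0 := by
    rw [hh0]
    apply div_pos (by linarith) hn1
  have hmesh : h0 < δ := by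
    rw [hh0, div_lt_iff₀ hn1]
    have h1 : (b - a) / δ < (n : ℝ) := hn
    have h2 : b - a < (n : ℝ) * δ := (div_lt_iff₀ hδ0).1 h1
    nlinarith
  -- midpoint selector
  set mid : ℝ → ℝ := fun x => a + (⌊(x - a) / h0⌋ : ℝ) * h0 + h0 / 2 with hmiddef
  set Wf : ℝ → ℝ := fun x => c + ((round (u (mid x)) : ℤ) : ℝ) with hWdef
  have hmid_close : ∀ x ∈ Ioo a b, |mid x - x| < δ := by
    intro x hx
    have h1 : (⌊(x - a) / h0⌋ : ℝ) ≤ (x - a) / h0 := Int.floor_le _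
    have h2 : (x - a) / h0 < (⌊(x - a) / h0⌋ : ℝ) + 1 := Int.lt_floor_add_one _
    have h3 : (⌊(x - a) / h0⌋ : ℝ) * h0 ≤ x - a := by
      rw [← le_div_iff₀ hh0pos]; exact h1
    have h4 : x - a < ((⌊(x - a) / h0⌋ : ℝ) + 1) * h0 := by
      rw [← div_lt_iff₀ hh0pos]; exact h2
    rw [hmiddef]
    simp only
    rw [abs_lt]
    constructor <;> nlinarith
  -- the step structure
  refine ⟨Wf, ⟨c, n + 1, fun j => a + ((j : ℕ) : ℝ) * h0,
      fun j => round (u (a + ((j : ℕ) : ℝ) * h0 + h0 / 2)), ?_, ?_, ?_, ?_⟩, ?_⟩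
  · intro i j hij
    simp only
    have : ((i : ℕ) : ℝ) ≤ ((j : ℕ) : ℝ) := by exact_mod_cast hij
    nlinarith
  · simp
  · simp only [Fin.val_last]
    push_cast
    rw [hh0]
    field_simp
    ring
  · intro j x hx
    simp only [Fin.coe_castSucc, Fin.val_succ] at hx
    have hfl : ⌊(x - a) / h0⌋ = ((j : ℕ) : ℤ) := by
      rw [Int.floor_eq_iff]
      constructor
      · push_cast
        rw [le_div_iff₀ hh0pos]
        have := hx.1
        push_cast at this
        linarith
      · push_cast
        rw [div_lt_iff₀ hh0pos]
        have := hx.2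
        push_cast at this
        linarith
    rw [hWdef]
    simp only [hmiddef]
    rw [hfl]
    push_cast
    ring_nf
  -- the estimate
  · have hae : ∀ᵐ x ∂(volume.restrict (Ioo a b)),
        |Wf x - (g x + c)| ≤ δc + 2 * |u x - g₀ x| := by
      filter_upwards [ae_restrict_mem measurableSet_Ioo, hgeq, hgint] with x hx hgx hzx
      obtain ⟨z, hz⟩ := hzx
      have hWx : Wf x - (g x + c) = ((round (u (mid x)) : ℤ) : ℝ) - g x := by
        rw [hWdef]; ring
      have hg₀x : g₀ x = g x := by
        rw [hg₀def, indicator_of_mem hx, ← hgx]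
      have hkey : |((round (u (mid x)) : ℤ) : ℝ) - g x| ≤ 2 * |u (mid x) - g x| := by
        by_cases habs : |u (mid x) - g x| < 1/2
        · have hround : round (u (mid x)) = z := by
            have : u (mid x) = (z : ℝ) + (u (mid x) - g x) := by rw [← hz]; ring
            rw [this, round_intCast_add]
            have h0 : round (u (mid x) - g x) = 0 := by
              rw [round_eq_zero_iff]
              rw [abs_lt] at habs
              exact ⟨by linarith [habs.1], by linarith [habs.2]⟩
            rw [h0, add_zero]
          rw [hround, ← hz, sub_self, abs_zero]
          positivity
        · push_neg at habs
          have h1 : |((round (u (mid x)) : ℤ) : ℝ) - u (mid x)| ≤ 1/2 := by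
            rw [abs_sub_comm]
            exact abs_sub_round _
          calc |((round (u (mid x)) : ℤ) : ℝ) - g x|
              ≤ |((round (u (mid x)) : ℤ) : ℝ) - u (mid x)| + |u (mid x) - g x| :=
                abs_sub_le _ _ _
            _ ≤ 1/2 + |u (mid x) - g x| := by linarith
            _ ≤ 2 * |u (mid x) - g x| := by linarith
      have hmidx : |u (mid x) - g x| ≤ δc / 2 + |u x - g₀ x| := by
        have hd : dist (u (mid x)) (u x) < δc / 2 := hδ (by
          rw [Real.dist_eq]
          exact hmid_close x hx)
        rw [Real.dist_eq] at hd
        calc |u (mid x) - g x| ≤ |u (mid x) - u x| + |u x - g x| := abs_sub_le _ _ _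
          _ ≤ δc / 2 + |u x - g₀ x| := by rw [hg₀x]; linarith
      rw [hWx]
      calc |((round (u (mid x)) : ℤ) : ℝ) - g x| ≤ 2 * |u (mid x) - g x| := hkey
        _ ≤ 2 * (δc / 2 + |u x - g₀ x|) := by linarith
        _ = δc + 2 * |u x - g₀ x| := by ring
    have hbound : eLpNorm (fun x => Wf x - (g x + c)) q (volume.restrict (Ioo a b)) ≤
        eLpNorm (fun x => δc + 2 * |u x - g₀ x|) q (volume.restrict (Ioo a b)) := by
      apply eLpNorm_mono_ae
      filter_upwards [hae] with x hx
      rw [Real.norm_eq_abs, Real.norm_eq_abs]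
      exact hx.trans (le_abs_self _)
    have hsplit : eLpNorm (fun x => δc + 2 * |u x - g₀ x|) q (volume.restrict (Ioo a b)) ≤
        eLpNorm (fun _ : ℝ => δc) q (volume.restrict (Ioo a b)) +
        eLpNorm (fun x => 2 * |u x - g₀ x|) q (volume.restrict (Ioo a b)) := by
      exact eLpNorm_add_le aestronglyMeasurable_const
        ((measurable_const.mul ((hucont.measurable.sub hg₀m).abs)).aestronglyMeasurable) hq1
    have hconst : eLpNorm (fun _ : ℝ => δc) q (volume.restrict (Ioo a b)) ≤ ε1 := by
      rw [eLpNorm_const δc hq0 hμ0]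
      rw [Real.enorm_eq_ofReal hδc0.le]
      exact hδc
    have hsecond : eLpNorm (fun x => 2 * |u x - g₀ x|) q (volume.restrict (Ioo a b)) ≤
        2 * ε1 := by
      have he : (fun x => 2 * |u x - g₀ x|) = (2:ℝ) • (fun x => |u x - g₀ x|) := by
        funext x; simp [smul_eq_mul]
      rw [he, eLpNorm_const_smul]
      have h2 : (‖(2:ℝ)‖ₑ : ℝ≥0∞) = 2 := by rw [Real.enorm_eq_ofReal (by norm_num)]; norm_num
      rw [h2]
      apply mul_le_mul_right ?_ 2
      have habs : (fun x : ℝ => |u x - g₀ x|) = (fun x => ‖u x - g₀ x‖) := by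
        funext x; rw [Real.norm_eq_abs]
      rw [habs, eLpNorm_norm]
      calc eLpNorm (fun x => u x - g₀ x) q (volume.restrict (Ioo a b))
          ≤ eLpNorm (fun x => u x - g₀ x) q volume :=
            eLpNorm_mono_measure _ Measure.restrict_le_self
        _ = eLpNorm (g₀ - u) q volume := by
            rw [← eLpNorm_neg]
            congr 1
            funext x
            simp
        _ ≤ ε1 := huclose
    calc eLpNorm (fun x => Wf x - (g x + c)) q (volume.restrict (Ioo a b))
        ≤ ε1 + 2 * ε1 := hbound.trans (hsplit.trans (add_le_add hconst hsecond))
      _ = 3 * ε1 := by ring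
      _ ≤ 3 * (ε / 3) := by
          apply mul_le_mul_right
          exact min_le_left _ _
      _ = ε := ENNReal.mul_div_cancel' (by norm_num) (by norm_num)

/-- Convergence of integer step functions gives a.e. pairwise integer differences. -/
lemma forward_pair (hab : a < b) {p : ℝ} (hp : 1 ≤ p) {V : ℝ → ℝ}
    (hV : MemLp V (ENNReal.ofReal p) (volume.restrict (Ioo a b)))
    {W : ℕ → ℝ → ℝ} (hWstep : ∀ k, IsIntegerStep a b (W k))
    (hconv : Tendsto (fun k => eLpNorm (fun x => W k x - V x) (ENNReal.ofReal p)
      (volume.restrict (Ioo a b))) atTop (𝓝 0)) :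
    ∀ᵐ q ∂((volume.restrict (Ioo a b)).prod (volume.restrict (Ioo a b))),
      ∃ z : ℤ, V q.1 - V q.2 = z := by
  choose cs fs hfs hrep using fun k => (hWstep k).exists_rep
  have hWm : ∀ k, AEStronglyMeasurable (W k) (volume.restrict (Ioo a b)) := fun k =>
    ((hfs k).aestronglyMeasurable).congr (by
      filter_upwards [hrep k] with x hx
      exact hx.1.symm)
  have hq0 : (ENNReal.ofReal p) ≠ 0 := by
    simp only [ne_eq, ENNReal.ofReal_eq_zero, not_le]
    linarith
  have htim : TendstoInMeasure (volume.restrict (Ioo a b)) W atTop V :=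
    tendstoInMeasure_of_tendsto_eLpNorm hq0 hWm hV.aestronglyMeasurable hconv
  obtain ⟨ns, -, haeconv⟩ := htim.exists_seq_tendsto_ae
  have hallrep : ∀ᵐ x ∂(volume.restrict (Ioo a b)), ∀ k, ∃ z : ℤ, W k x = cs k + z := by
    rw [ae_all_iff]
    intro k
    filter_upwards [hrep k] with x hx using hx.2
  have hgood : ∀ᵐ x ∂(volume.restrict (Ioo a b)),
      (Tendsto (fun i => W (ns i) x) atTop (𝓝 (V x)) ∧
        ∀ k, ∃ z : ℤ, W k x = cs k + z) := haeconv.and hallrep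
  filter_upwards [ae_pair hgood hgood] with q hq
  obtain ⟨⟨hc1, hz1⟩, ⟨hc2, hz2⟩⟩ := hq
  apply exists_int_of_tendsto (hc1.sub hc2)
  intro i
  obtain ⟨z1, hz1'⟩ := hz1 (ns i)
  obtain ⟨z2, hz2'⟩ := hz2 (ns i)
  exact ⟨z1 - z2, by rw [hz1', hz2']; push_cast; ring⟩

end Main

/-- **Strong `L^p`-closure of `L^p_R(I)` in dimension one.** For a bounded open interval
`I = (a,b)` and `p ∈ [1, ∞)`, a function `V ∈ L^p(I)` is a strong `L^p`-limit of functions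
in `L^p_R(I)` if and only if it coincides a.e. with an integer-valued `L^p` function plus a
constant, and this in turn holds if and only if `V ∈ L^p_ℤ(I)`. -/
theorem closure_LpR_one_dim (a b : ℝ) (hab : a < b) (p : ℝ) (hp : 1 ≤ p) (V : ℝ → ℝ)
    (hV : MemLp V (ENNReal.ofReal p) (volume.restrict (Ioo a b))) :
    ((∃ W : ℕ → ℝ → ℝ, (∀ k, IsIntegerStep a b (W k)) ∧
        Tendsto (fun k => eLpNorm (fun x => W k x - V x) (ENNReal.ofReal p)
          (volume.restrict (Ioo a b))) atTop (𝓝 0)) ↔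
      (∃ (g : ℝ → ℝ) (c : ℝ), MemLp g (ENNReal.ofReal p) (volume.restrict (Ioo a b)) ∧
        (∀ᵐ x ∂volume.restrict (Ioo a b), ∃ z : ℤ, g x = z) ∧
        (∀ᵐ x ∂volume.restrict (Ioo a b), V x = g x + c)))
    ∧
    ((∃ (g : ℝ → ℝ) (c : ℝ), MemLp g (ENNReal.ofReal p) (volume.restrict (Ioo a b)) ∧
        (∀ᵐ x ∂volume.restrict (Ioo a b), ∃ z : ℤ, g x = z) ∧
        (∀ᵐ x ∂volume.restrict (Ioo a b), V x = g x + c)) ↔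
      HasIntegerJumps a b V) := by
  constructor
  · constructor
    · rintro ⟨W, hWstep, hconv⟩
      exact key_decomp hab hp hV (forward_pair hab hp hV hWstep hconv)
    · rintro ⟨g, c, hg, hgint, hVg⟩
      have hstep : ∀ k : ℕ, ∃ Wf, IsIntegerStep a b Wf ∧
          eLpNorm (fun x => Wf x - (g x + c)) (ENNReal.ofReal p)
            (volume.restrict (Ioo a b)) ≤ ((k : ℝ≥0∞) + 1)⁻¹ := fun k =>
        exists_step_approx hab hp c hg hgint
          (ENNReal.inv_ne_zero.2 (by simp))
      choose W hW1 hW2 using hstep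
      refine ⟨W, hW1, ?_⟩
      have heq : ∀ k, eLpNorm (fun x => W k x - V x) (ENNReal.ofReal p)
          (volume.restrict (Ioo a b)) = eLpNorm (fun x => W k x - (g x + c))
          (ENNReal.ofReal p) (volume.restrict (Ioo a b)) := fun k =>
        eLpNorm_congr_ae (by filter_upwards [hVg] with x hx; rw [hx])
      have hlim : Tendsto (fun k : ℕ => ((k : ℝ≥0∞) + 1)⁻¹) atTop (𝓝 0) := by
        have h1 := ENNReal.tendsto_inv_nat_nhds_zero.comp (tendsto_add_atTop_nat 1)
        have h2 : (fun k : ℕ => (((k + 1 : ℕ) : ℝ≥0∞))⁻¹) =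
            (fun k : ℕ => ((k : ℝ≥0∞) + 1)⁻¹) := by
          funext k
          push_cast
          rfl
        rw [← h2]
        exact h1
      apply tendsto_of_tendsto_of_tendsto_of_le_of_le tendsto_const_nhds hlim
        (fun k => zero_le) (fun k => by rw [heq k]; exact hW2 k)
  · constructor
    · exact decomp_to_jumps hab hp hV
    · intro h
      exact key_decomp hab hp hV (jumps_to_pair hab hV.aestronglyMeasurable h)
end
end

section
/- Let I ⊂ ℝ be a bounded connected open interval and p ∈ [1, +∞). Then the weak L^p-closure of L^p_ℤ(I) is all of L^p(I): for every h ∈ L^p(I) there exists a sequence (f_k)_{k∈ℕ}, bounded in L^p(I) and with each f_k integer-valued a.e., such that ∫_I f_k g dℒ¹ → ∫_I h g dℒ¹ for every g ∈ L^{p'}(I) (with g ∈ L^∞(I) when p = 1). -/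
open MeasureTheory Filter Topology Set
open scoped ENNReal NNReal

noncomputable section

namespace WeakClosureAux

lemma partition_eq (a L : ℝ) (hL : 0 ≤ L) (N : ℕ) :
    (⋃ i ∈ Finset.range N, Ico (a + (i : ℝ) * L) (a + ((i : ℝ) + 1) * L))
      = Ico a (a + (N : ℝ) * L) := by
  induction N with
  | zero => simp
  | succ n ih =>
    rw [Finset.range_add_one, Finset.set_biUnion_insert, ih, union_comm,
      Ico_union_Ico_eq_Ico (by nlinarith [Nat.cast_nonneg (α := ℝ) n])
        (by nlinarith [Nat.cast_nonneg (α := ℝ) n])]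
    congr 1
    push_cast
    ring

lemma cells_disjoint (a L : ℝ) (hL : 0 ≤ L) {i j : ℕ} (hij : i ≠ j) :
    Disjoint (Ico (a + (i : ℝ) * L) (a + ((i : ℝ) + 1) * L))
      (Ico (a + (j : ℝ) * L) (a + ((j : ℝ) + 1) * L)) := by
  rw [Set.Ico_disjoint_Ico]
  rcases lt_or_gt_of_ne hij with hlt | hlt
  · refine le_trans (min_le_left _ _) (le_trans ?_ (le_max_right _ _))
    have : ((i : ℝ) + 1) ≤ (j : ℝ) := by exact_mod_cast hlt
    nlinarith
  · refine le_trans (min_le_right _ _) (le_trans ?_ (le_max_left _ _))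
    have : ((j : ℝ) + 1) ≤ (i : ℝ) := by exact_mod_cast hlt
    nlinarith

/-- Functions uniformly bounded by `1` whose integrals vanish over each cell of an
equi-partition of `(a,b)` into `k+1` pieces converge weakly (against `L¹`) to zero. -/
lemma core (a b : ℝ) (hab : a < b) (v : ℕ → ℝ → ℝ)
    (hvm : ∀ k, Measurable (v k))
    (hvb : ∀ k x, |v k x| ≤ 1)
    (hzero : ∀ k, ∀ i ∈ Finset.range (k + 1),
      ∫ x in Ico (a + (i : ℝ) * ((b - a) / ((k : ℝ) + 1)))
          (a + ((i : ℝ) + 1) * ((b - a) / ((k : ℝ) + 1))), v k x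
        ∂(volume.restrict (Ioo a b)) = 0)
    (g : ℝ → ℝ) (hg : Integrable g (volume.restrict (Ioo a b))) :
    Tendsto (fun k => ∫ x, v k x * g x ∂(volume.restrict (Ioo a b))) atTop (𝓝 0) := by
  set μ := volume.restrict (Ioo a b) with hμ
  haveI hfin : IsFiniteMeasure μ := by
    constructor
    rw [hμ, Measure.restrict_apply_univ, Real.volume_Ioo]
    exact ENNReal.ofReal_lt_top
  rw [NormedAddCommGroup.tendsto_nhds_zero]
  intro ε hε
  have hba : 0 < b - a := sub_pos.mpr hab
  -- approximate `g` in `L¹` by a compactly supported continuous function `w`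
  have hG : Integrable ((Ioo a b).indicator g) volume :=
    (integrable_indicator_iff measurableSet_Ioo).mpr hg
  obtain ⟨w, hw_supp, hw_close, hw_cont, hw_int⟩ :=
    hG.exists_hasCompactSupport_integral_sub_le (show (0:ℝ) < ε/4 by positivity)
  have hw_uc : UniformContinuous w := hw_supp.uniformContinuous_of_continuous hw_cont
  set ε₂ := ε / (4 * (b - a)) with hε₂def
  have hε₂ : 0 < ε₂ := by positivity
  obtain ⟨δ, hδ, hδ'⟩ := Metric.uniformContinuous_iff.mp hw_uc ε₂ hε₂
  obtain ⟨K, hK⟩ := exists_nat_gt ((b - a) / δ)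
  have hwμ : Integrable w μ := hw_int.integrableOn
  filter_upwards [eventually_ge_atTop K] with k hk
  set L := (b - a) / ((k : ℝ) + 1) with hLdef
  have hNpos : (0:ℝ) < (k:ℝ) + 1 := by positivity
  have hL : 0 < L := by positivity
  have hLδ : L < δ := by
    rw [hLdef, div_lt_iff₀ hNpos]
    have h2 : ((K:ℝ)) ≤ (k:ℝ) := Nat.cast_le.mpr hk
    have h3 : (b - a) / δ < (k:ℝ) + 1 := by linarith
    calc b - a = ((b - a) / δ) * δ := by field_simp
    _ < ((k:ℝ) + 1) * δ := mul_lt_mul_of_pos_right h3 hδ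
    _ = δ * ((k:ℝ) + 1) := by ring
  have hbound : ∀ x, ‖v k x‖ ≤ 1 := fun x => by simpa [Real.norm_eq_abs] using hvb k x
  -- splitting of the integral
  have hint1 : Integrable (fun x => v k x * (g x - w x)) μ :=
    Integrable.bdd_mul (hg.sub hwμ) (hvm k).aestronglyMeasurable
      (Eventually.of_forall hbound)
  have hint2 : Integrable (fun x => v k x * w x) μ :=
    Integrable.bdd_mul hwμ (hvm k).aestronglyMeasurable (Eventually.of_forall hbound)
  have hIeq : ∫ x, v k x * g x ∂μ
      = (∫ x, v k x * (g x - w x) ∂μ) + ∫ x, v k x * w x ∂μ := by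
    rw [← integral_add hint1 hint2]
    exact integral_congr_ae (Eventually.of_forall fun x => by ring)
  -- first bound
  have habs1 : ‖∫ x, v k x * (g x - w x) ∂μ‖ ≤ ε / 4 := by
    have hdom : Integrable (fun x => ‖(Ioo a b).indicator g x - w x‖) μ :=
      ((hG.sub hw_int).norm).integrableOn
    have hb : ∀ᵐ x ∂μ, ‖v k x * (g x - w x)‖ ≤ ‖(Ioo a b).indicator g x - w x‖ := by
      filter_upwards [ae_restrict_mem measurableSet_Ioo] with x hx
      rw [indicator_of_mem hx, norm_mul]
      calc ‖v k x‖ * ‖g x - w x‖ ≤ 1 * ‖g x - w x‖ :=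
            mul_le_mul_of_nonneg_right (hbound x) (norm_nonneg _)
        _ = ‖g x - w x‖ := one_mul _
    refine le_trans (norm_integral_le_of_norm_le hdom hb) ?_
    refine le_trans (setIntegral_le_integral ((hG.sub hw_int).norm)
      (Eventually.of_forall fun x => norm_nonneg _)) hw_close
  -- second bound
  have hrestrict_eq : μ.restrict (Ico a b) = μ := by
    rw [hμ, Measure.restrict_restrict measurableSet_Ico,
      inter_eq_self_of_subset_right Ioo_subset_Ico_self]
  have hunion : (⋃ i ∈ Finset.range (k+1),
      Ico (a + (i : ℝ) * L) (a + ((i : ℝ) + 1) * L)) = Ico a b := by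
    rw [partition_eq a L hL.le (k+1)]
    congr 1
    rw [hLdef]
    push_cast
    field_simp
    ring
  have hkey : ∫ x, v k x * w x ∂μ = ∑ i ∈ Finset.range (k+1),
      ∫ x in Ico (a + (i : ℝ) * L) (a + ((i : ℝ) + 1) * L), v k x * w x ∂μ := by
    rw [← integral_biUnion_finset _ (fun i _ => measurableSet_Ico)
        (fun i _ j _ hij => cells_disjoint a L hL.le hij)
        (fun i _ => hint2.integrableOn), hunion]
    show ∫ x, v k x * w x ∂μ = ∫ x, v k x * w x ∂(μ.restrict (Ico a b))
    rw [hrestrict_eq]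
  have hterm : ∀ i ∈ Finset.range (k+1),
      ‖∫ x in Ico (a + (i : ℝ) * L) (a + ((i : ℝ) + 1) * L), v k x * w x ∂μ‖ ≤ ε₂ * L := by
    intro i hi
    have hz := hzero k i hi
    rw [← hLdef] at hz
    set ci := a + (i : ℝ) * L with hcidef
    set Di := Ico ci (a + ((i : ℝ) + 1) * L) with hDidef
    have hwD : Integrable w (μ.restrict Di) := hwμ.integrableOn
    have hiw : Integrable (fun x => v k x * (w x - w ci)) (μ.restrict Di) :=
      Integrable.bdd_mul (hwD.sub (integrable_const _)) (hvm k).aestronglyMeasurable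
        (Eventually.of_forall hbound)
    have hiv : Integrable (fun x => v k x * w ci) (μ.restrict Di) :=
      Integrable.bdd_mul (integrable_const _) (hvm k).aestronglyMeasurable
        (Eventually.of_forall hbound)
    have heq : ∫ x in Di, v k x * w x ∂μ
        = (∫ x in Di, v k x * (w x - w ci) ∂μ) + (∫ x in Di, v k x ∂μ) * w ci := by
      rw [← integral_mul_const, ← integral_add hiw hiv]
      exact integral_congr_ae (Eventually.of_forall fun x => by ring)
    rw [heq, hz, zero_mul, add_zero]
    have hb : ∀ᵐ x ∂(μ.restrict Di), ‖v k x * (w x - w ci)‖ ≤ ε₂ := by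
      filter_upwards [ae_restrict_mem (measurableSet_Ico : MeasurableSet Di)] with x hx
      have hxd : dist x ci < δ := by
        rw [Real.dist_eq, abs_of_nonneg (by linarith [hx.1])]
        have hx2 : x < a + ((i : ℝ) + 1) * L := hx.2
        have : a + ((i : ℝ) + 1) * L = ci + L := by rw [hcidef]; ring
        linarith [this ▸ hx2]
      have hdist := hδ' hxd
      rw [norm_mul]
      calc ‖v k x‖ * ‖w x - w ci‖ ≤ 1 * ε₂ := by
            refine mul_le_mul (hbound x) ?_ (norm_nonneg _) zero_le_one
            rw [← dist_eq_norm]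
            exact hdist.le
        _ = ε₂ := one_mul _
    refine le_trans (norm_integral_le_of_norm_le (integrable_const ε₂) hb) ?_
    rw [integral_const]
    have hvol : (μ.restrict Di) univ ≤ ENNReal.ofReal L := by
      rw [Measure.restrict_apply_univ, hμ, Measure.restrict_apply measurableSet_Ico]
      refine le_trans (measure_mono inter_subset_left) ?_
      have hlen : a + ((i : ℝ) + 1) * L - ci = L := by rw [hcidef]; ring
      rw [Real.volume_Ico, hlen]
    have htr : ((μ.restrict Di) univ).toReal ≤ L := by
      refine le_trans (ENNReal.toReal_mono ENNReal.ofReal_ne_top hvol) ?_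
      rw [ENNReal.toReal_ofReal hL.le]
    rw [smul_eq_mul]
    calc ((μ.restrict Di) univ).toReal * ε₂ ≤ L * ε₂ :=
          mul_le_mul_of_nonneg_right htr hε₂.le
      _ = ε₂ * L := mul_comm _ _
  have hsum : ‖∫ x, v k x * w x ∂μ‖ ≤ ε₂ * (b - a) := by
    rw [hkey]
    refine le_trans (norm_sum_le _ _) (le_trans (Finset.sum_le_sum hterm) ?_)
    rw [Finset.sum_const, Finset.card_range, nsmul_eq_mul]
    have hNL : ((k:ℝ) + 1) * L = b - a := by rw [hLdef]; field_simp
    have hfin2 : ((k+1 : ℕ) : ℝ) * (ε₂ * L) = ε₂ * (b - a) := by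
      rw [← hNL]; push_cast; ring
    exact hfin2.le
  have hfinal : ε₂ * (b - a) = ε / 4 := by
    rw [hε₂def]
    field_simp
  calc ‖∫ x, v k x * g x ∂μ‖
      = ‖(∫ x, v k x * (g x - w x) ∂μ) + ∫ x, v k x * w x ∂μ‖ := by rw [hIeq]
    _ ≤ ‖∫ x, v k x * (g x - w x) ∂μ‖ + ‖∫ x, v k x * w x ∂μ‖ := norm_add_le _ _
    _ ≤ ε / 4 + ε₂ * (b - a) := add_le_add habs1 hsum
    _ < ε := by rw [hfinal]; linarith

end WeakClosureAux

/-- **The weak `L^p`-closure of `L^p_ℤ(I)` is all of `L^p(I)` in dimension one.** For every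
bounded open interval `I = (a,b)`, `p ∈ [1, ∞)` and `h ∈ L^p(I)`, there is a sequence
`(f_k)` of a.e. integer-valued functions, bounded in `L^p(I)`, such that
`∫_I f_k g → ∫_I h g` for every `g` in the dual space `L^{p'}(I)` (where `p'` is the
Hölder conjugate of `p`, so `g ∈ L^∞(I)` if `p = 1`). -/
theorem weak_closure_one_dim (a b : ℝ) (hab : a < b) (p : ℝ) (hp : 1 ≤ p) (h : ℝ → ℝ)
    (hh : MemLp h (ENNReal.ofReal p) (volume.restrict (Ioo a b))) :
    ∃ f : ℕ → ℝ → ℝ,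
      (∀ k, MemLp (f k) (ENNReal.ofReal p) (volume.restrict (Ioo a b)) ∧
        ∀ᵐ x ∂volume.restrict (Ioo a b), ∃ z : ℤ, f k x = z) ∧
      (∃ C : ℝ, ∀ k, eLpNorm (f k) (ENNReal.ofReal p) (volume.restrict (Ioo a b))
        ≤ ENNReal.ofReal C) ∧
      ∀ q : ℝ≥0∞, (ENNReal.ofReal p)⁻¹ + q⁻¹ = 1 →
        ∀ g : ℝ → ℝ, MemLp g q (volume.restrict (Ioo a b)) →
          Tendsto (fun k => ∫ x in Ioo a b, f k x * g x) atTop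
            (𝓝 (∫ x in Ioo a b, h x * g x)) := by
  classical
  set μ := volume.restrict (Ioo a b) with hμ
  haveI hfin : IsFiniteMeasure μ := by
    constructor
    rw [hμ, Measure.restrict_apply_univ, Real.volume_Ioo]
    exact ENNReal.ofReal_lt_top
  have hba : 0 < b - a := sub_pos.mpr hab
  -- measurable representative of h
  obtain ⟨h', h'sm, hh'⟩ := hh.aestronglyMeasurable
  have h'm : Measurable h' := h'sm.measurable
  have hh'p : MemLp h' (ENNReal.ofReal p) μ := hh.ae_eq hh'
  -- fractional and floor parts
  set θ : ℝ → ℝ := fun x => Int.fract (h' x) with hθdef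
  have hθm : Measurable θ := h'm.fract
  have hθ0 : ∀ x, 0 ≤ θ x := fun x => Int.fract_nonneg _
  have hθ1 : ∀ x, θ x < 1 := fun x => Int.fract_lt_one _
  set flr : ℝ → ℝ := fun x => ((⌊h' x⌋ : ℤ) : ℝ) with hflrdef
  have hflrm : Measurable flr := by
    have : flr = fun x => h' x - Int.fract (h' x) := funext fun x => (Int.self_sub_fract _).symm
    rw [this]
    exact h'm.sub h'm.fract
  have hflr_bound : ∀ x, |flr x| ≤ |h' x| + 1 := by
    intro x
    refine abs_le.mpr ⟨?_, ?_⟩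
    · have h1 := Int.sub_one_lt_floor (h' x)
      have h2 := neg_abs_le (h' x)
      simp only [hflrdef]
      linarith
    · have h1 := Int.floor_le (h' x)
      have h2 := le_abs_self (h' x)
      simp only [hflrdef]
      linarith
  -- the partition data
  set L : ℕ → ℝ := fun k => (b - a) / ((k : ℝ) + 1) with hLdef
  have hLpos : ∀ k, 0 < L k := fun k => by
    rw [hLdef]; positivity
  set m : ℕ → ℕ → ℝ := fun k i =>
    ∫ x in Ico (a + (i : ℝ) * L k) (a + ((i : ℝ) + 1) * L k), θ x ∂μ with hmdef
  set A : ℕ → Set ℝ := fun k => ⋃ i ∈ Finset.range (k + 1),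
    Ioo (a + (i : ℝ) * L k) (a + (i : ℝ) * L k + m k i) with hAdef
  have hAmeas : ∀ k, MeasurableSet (A k) := fun k =>
    MeasurableSet.biUnion (Finset.range (k + 1)).countable_toSet
      (fun i _ => measurableSet_Ioo)
  have hIndm : ∀ k, Measurable ((A k).indicator (1 : ℝ → ℝ)) :=
    fun k => measurable_one.indicator (hAmeas k)
  have hInd_bound : ∀ k x, |(A k).indicator (1 : ℝ → ℝ) x| ≤ 1 := by
    intro k x
    by_cases hx : x ∈ A k <;> simp [hx]
  -- the approximating sequence
  set f : ℕ → ℝ → ℝ := fun k x => flr x + (A k).indicator 1 x with hfdef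
  have hfm : ∀ k, Measurable (f k) := fun k => hflrm.add (hIndm k)
  have hfb : ∀ k x, ‖f k x‖ ≤ ‖|h' x| + 2‖ := by
    intro k x
    rw [Real.norm_eq_abs, Real.norm_eq_abs,
      abs_of_nonneg (by positivity : (0:ℝ) ≤ |h' x| + 2)]
    calc |f k x| ≤ |flr x| + |(A k).indicator 1 x| := abs_add_le _ _
      _ ≤ (|h' x| + 1) + 1 := add_le_add (hflr_bound x) (hInd_bound k x)
      _ = |h' x| + 2 := by ring
  have hψ : MemLp (fun x => |h' x| + 2) (ENNReal.ofReal p) μ := by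
    have h1 : MemLp (fun x => |h' x|) (ENNReal.ofReal p) μ := by
      simpa [Real.norm_eq_abs] using hh'p.norm
    exact h1.add (memLp_const 2)
  have hfmem : ∀ k, MemLp (f k) (ENNReal.ofReal p) μ := fun k =>
    hψ.of_le (hfm k).aestronglyMeasurable (Eventually.of_forall (hfb k))
  have hflrmem : MemLp flr (ENNReal.ofReal p) μ := by
    refine hψ.of_le hflrm.aestronglyMeasurable (Eventually.of_forall fun x => ?_)
    rw [Real.norm_eq_abs, Real.norm_eq_abs,
      abs_of_nonneg (by positivity : (0:ℝ) ≤ |h' x| + 2)]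
    linarith [hflr_bound x]
  refine ⟨f, fun k => ⟨hfmem k, Eventually.of_forall fun x => ?_⟩,
    ⟨(eLpNorm (fun x => |h' x| + 2) (ENNReal.ofReal p) μ).toReal, fun k => ?_⟩, ?_⟩
  · -- integer valued
    by_cases hx : x ∈ A k
    · exact ⟨⌊h' x⌋ + 1, by simp [hfdef, hflrdef, indicator_of_mem hx]⟩
    · exact ⟨⌊h' x⌋, by simp [hfdef, hflrdef, indicator_of_notMem hx]⟩
  · -- uniform Lp bound
    refine le_trans (eLpNorm_mono (hfb k)) ?_
    rw [ENNReal.ofReal_toReal hψ.eLpNorm_lt_top.ne]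
  · -- weak convergence
    intro q hq g hg
    have hq1 : (1 : ℝ≥0∞) ≤ q := ENNReal.inv_le_one.mp (le_of_le_of_eq le_add_self hq)
    have hgint : Integrable g μ := hg.integrable hq1
    -- products with g are integrable
    have hprod : ∀ u : ℝ → ℝ, MemLp u (ENNReal.ofReal p) μ →
        Integrable (fun x => u x * g x) μ := by
      intro u hu
      have hpqr : (1 : ℝ≥0∞) / 1 = 1 / q + 1 / ENNReal.ofReal p := by
        simp only [one_div]
        rw [inv_one, ← hq, add_comm]
      have h1 : MemLp (g • u) 1 μ := hu.smul hg (hpqr := ⟨by rw [inv_one, ← hq, add_comm]⟩)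
      have h2 := memLp_one_iff_integrable.mp h1
      have h3 : (fun x => u x * g x) = g • u := by
        funext x
        simp [smul_eq_mul, mul_comm]
      rw [h3]
      exact h2
    have hIflr : Integrable (fun x => flr x * g x) μ := hprod flr hflrmem
    have hIθ : Integrable (fun x => θ x * g x) μ :=
      hgint.bdd_mul hθm.aestronglyMeasurable
        (Eventually.of_forall fun x => by
          rw [Real.norm_eq_abs, abs_of_nonneg (hθ0 x)]; exact (hθ1 x).le)
    have hIind : ∀ k, Integrable (fun x => (A k).indicator 1 x * g x) μ := fun k =>
      hgint.bdd_mul (hIndm k).aestronglyMeasurable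
        (Eventually.of_forall fun x => by
          rw [Real.norm_eq_abs]; exact hInd_bound k x)
    have hvb : ∀ k x, |(A k).indicator (1 : ℝ → ℝ) x - θ x| ≤ 1 := by
      intro k x
      by_cases hx : x ∈ A k
      · rw [indicator_of_mem hx]
        simp only [Pi.one_apply]
        rw [abs_le]
        constructor <;> [linarith [hθ1 x]; linarith [hθ0 x]]
      · rw [indicator_of_notMem hx]
        simp only [zero_sub, abs_neg]
        rw [abs_of_nonneg (hθ0 x)]
        exact (hθ1 x).le
    have hIv : ∀ k, Integrable (fun x => ((A k).indicator 1 x - θ x) * g x) μ := fun k =>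
      hgint.bdd_mul ((hIndm k).sub hθm).aestronglyMeasurable
        (Eventually.of_forall fun x => by
          rw [Real.norm_eq_abs]; exact hvb k x)
    -- θ is integrable
    have hθint : Integrable θ μ :=
      (integrable_const (1:ℝ)).mono' hθm.aestronglyMeasurable
        (Eventually.of_forall fun x => by
          rw [Real.norm_eq_abs, abs_of_nonneg (hθ0 x)]; exact (hθ1 x).le)
    -- zero averages over the cells
    have hzeros : ∀ k, ∀ i ∈ Finset.range (k + 1),
        ∫ x in Ico (a + (i : ℝ) * ((b - a) / ((k : ℝ) + 1)))
            (a + ((i : ℝ) + 1) * ((b - a) / ((k : ℝ) + 1))),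
          ((A k).indicator 1 x - θ x) ∂μ = 0 := by
      intro k i hi
      have hik : (i : ℝ) ≤ (k : ℝ) := by
        exact_mod_cast Nat.lt_succ_iff.mp (Finset.mem_range.mp hi)
      have hLk : (0:ℝ) < (b - a) / ((k : ℝ) + 1) := by positivity
      have hLL : (b - a) / ((k : ℝ) + 1) = L k := by rw [hLdef]
      rw [hLL]
      set ci := a + (i : ℝ) * L k with hcidef
      set Di : Set ℝ := Ico ci (a + ((i : ℝ) + 1) * L k) with hDidef
      have hDmeas : MeasurableSet Di := measurableSet_Ico
      -- bounds on m k i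
      have hm0 : 0 ≤ m k i := by
        rw [hmdef]
        exact integral_nonneg fun x => hθ0 x
      have hmL : m k i ≤ L k := by
        have h1 : m k i ≤ ∫ _ in Di, (1:ℝ) ∂μ := by
          rw [hmdef]
          exact integral_mono hθint.integrableOn (integrable_const 1)
            (fun x => (hθ1 x).le)
        have h2 : ∫ _ in Di, (1:ℝ) ∂μ = ((μ.restrict Di) univ).toReal := by
          rw [integral_const, smul_eq_mul, mul_one]; rfl
        have h3 : (μ.restrict Di) univ ≤ ENNReal.ofReal (L k) := by
          rw [Measure.restrict_apply_univ, hμ, Measure.restrict_apply hDmeas]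
          refine le_trans (measure_mono inter_subset_left) ?_
          have hlen : a + ((i : ℝ) + 1) * L k - ci = L k := by rw [hcidef]; ring
          rw [Real.volume_Ico, hlen]
        have h4 : ((μ.restrict Di) univ).toReal ≤ L k := by
          refine le_trans (ENNReal.toReal_mono ENNReal.ofReal_ne_top h3) ?_
          rw [ENNReal.toReal_ofReal (hLpos k).le]
        linarith
      -- the intersection of A k with the cell
      have hpiece_sub : ∀ j ∈ Finset.range (k+1),
          Ioo (a + (j : ℝ) * L k) (a + (j : ℝ) * L k + m k j) ⊆
            Ico (a + (j : ℝ) * L k) (a + ((j : ℝ) + 1) * L k) := by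
        intro j hj x hx
        have hm0j : 0 ≤ m k j := by
          rw [hmdef]; exact integral_nonneg fun x => hθ0 x
        have hmLj : m k j ≤ L k := by
          -- same argument as hmL, for j
          have h1 : m k j ≤ ∫ _ in Ico (a + (j : ℝ) * L k) (a + ((j : ℝ) + 1) * L k),
              (1:ℝ) ∂μ := by
            rw [hmdef]
            exact integral_mono hθint.integrableOn (integrable_const 1)
              (fun x => (hθ1 x).le)
          have h2 : ∫ _ in Ico (a + (j : ℝ) * L k) (a + ((j : ℝ) + 1) * L k), (1:ℝ) ∂μ
              = ((μ.restrict (Ico (a + (j : ℝ) * L k) (a + ((j : ℝ) + 1) * L k))) univ).toReal := by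
            rw [integral_const, smul_eq_mul, mul_one]; rfl
          have h3 : (μ.restrict (Ico (a + (j : ℝ) * L k) (a + ((j : ℝ) + 1) * L k))) univ
              ≤ ENNReal.ofReal (L k) := by
            rw [Measure.restrict_apply_univ, hμ, Measure.restrict_apply measurableSet_Ico]
            refine le_trans (measure_mono inter_subset_left) ?_
            have hlen : a + ((j : ℝ) + 1) * L k - (a + (j : ℝ) * L k) = L k := by ring
            rw [Real.volume_Ico, hlen]
          have h4 := le_trans (ENNReal.toReal_mono ENNReal.ofReal_ne_top h3)
            (le_of_eq (ENNReal.toReal_ofReal (hLpos k).le))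
          linarith
        exact ⟨hx.1.le, by nlinarith [hx.2]⟩
      have hinter : A k ∩ Di = Ioo ci (ci + m k i) := by
        apply Subset.antisymm
        · rintro x ⟨hxA, hxD⟩
          rw [hAdef] at hxA
          simp only [mem_iUnion, exists_prop] at hxA
          obtain ⟨j, hj, hxj⟩ := hxA
          rcases eq_or_ne j i with rfl | hji
          · exact hxj
          · exfalso
            have hxDj := hpiece_sub j hj hxj
            have hdisj := WeakClosureAux.cells_disjoint a (L k) (hLpos k).le hji
            exact (hdisj.ne_of_mem hxDj hxD) rfl
        · intro x hx
          refine ⟨?_, hpiece_sub i hi hx⟩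
          rw [hAdef]
          simp only [mem_iUnion, exists_prop]
          exact ⟨i, hi, hx⟩
      have hIoo_sub : Ioo ci (ci + m k i) ⊆ Ioo a b := by
        intro x hx
        constructor
        · have : a ≤ ci := by
            rw [hcidef]
            nlinarith [Nat.cast_nonneg (α := ℝ) i, (hLpos k).le]
          linarith [hx.1]
        · have hub : ci + m k i ≤ b := by
            have hb' : a + ((k : ℝ) + 1) * L k = b := by
              rw [hLdef]; field_simp; ring
            rw [hcidef]
            nlinarith [hLpos k]
          linarith [hx.2]
      -- compute the integral of the indicator over the cell
      have hind_int : ∫ x in Di, (A k).indicator (1 : ℝ → ℝ) x ∂μ = m k i := by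
        rw [integral_indicator (hAmeas k)]
        rw [Measure.restrict_restrict (hAmeas k)]
        simp only [Pi.one_apply]
        rw [setIntegral_const, smul_eq_mul, mul_one]
        have : μ (A k ∩ Di) = ENNReal.ofReal (m k i) := by
          rw [hinter, hμ, Measure.restrict_apply measurableSet_Ioo,
            inter_eq_self_of_subset_left hIoo_sub, Real.volume_Ioo]
          congr 1
          ring
        rw [measureReal_def, this, ENNReal.toReal_ofReal hm0]
      have hθ_int : ∫ x in Di, θ x ∂μ = m k i := by
        simp only [hmdef, hDidef, hcidef]
      have hIndint : Integrable ((A k).indicator (1 : ℝ → ℝ)) μ :=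
        (integrable_const (1:ℝ)).mono' (hIndm k).aestronglyMeasurable
          (Eventually.of_forall fun x => by
            rw [Real.norm_eq_abs]; exact hInd_bound k x)
      rw [integral_sub hIndint.integrableOn hθint.integrableOn, hind_int, hθ_int, sub_self]
    -- apply the core lemma
    have hcore := WeakClosureAux.core a b hab
        (fun k x => (A k).indicator 1 x - θ x)
        (fun k => (hIndm k).sub hθm)
        (fun k x => hvb k x)
        hzeros g hgint
    -- identify the integrals
    have heq1 : ∀ k, ∫ x, f k x * g x ∂μ
        = (∫ x, flr x * g x ∂μ) + ∫ x, (A k).indicator 1 x * g x ∂μ := by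
      intro k
      rw [← integral_add hIflr (hIind k)]
      exact integral_congr_ae (Eventually.of_forall fun x => by simp only [hfdef]; ring)
    have hdiff : ∀ k, ∫ x, (A k).indicator 1 x * g x ∂μ
        = (∫ x, ((A k).indicator 1 x - θ x) * g x ∂μ) + ∫ x, θ x * g x ∂μ := by
      intro k
      rw [← integral_add (hIv k) hIθ]
      exact integral_congr_ae (Eventually.of_forall fun x => by ring)
    have heq2 : ∫ x, h x * g x ∂μ = (∫ x, flr x * g x ∂μ) + ∫ x, θ x * g x ∂μ := by
      rw [← integral_add hIflr hIθ]
      apply integral_congr_ae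
      filter_upwards [hh'] with x hx
      have hsum : flr x + θ x = h' x := Int.floor_add_fract _
      rw [hx, ← hsum]
      ring
    have hfun : (fun k => ∫ x, f k x * g x ∂μ)
        = fun k => (∫ x, flr x * g x ∂μ)
            + ((∫ x, ((A k).indicator 1 x - θ x) * g x ∂μ) + ∫ x, θ x * g x ∂μ) := by
      funext k
      rw [heq1 k, hdiff k]
    rw [hfun, heq2]
    have htend : Tendsto (fun k => (∫ x, flr x * g x ∂μ)
        + ((∫ x, ((A k).indicator 1 x - θ x) * g x ∂μ) + ∫ x, θ x * g x ∂μ)) atTop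
        (𝓝 ((∫ x, flr x * g x ∂μ) + (0 + ∫ x, θ x * g x ∂μ))) :=
      tendsto_const_nhds.add (hcore.add tendsto_const_nhds)
    simpa using htend
end
end

section
/- Let (f_k)_{k∈ℕ} ⊂ L¹(0,1) satisfy ‖f_k‖_{L¹} ≤ C for every k ∈ ℕ. Then for every integer h ≥ 2 there exists a compact set W_h ⊂ (1/h, 1) such that ℒ¹(W_h) ≥ 1 − (C+2)/h and, for ℒ¹-a.e. ρ ∈ W_h and every k ∈ ℕ, there exists k' > k with |f_{k'}(ρ)| ≤ h. -/
open MeasureTheory Filter Topology Set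
open scoped ENNReal NNReal

noncomputable section

/-- **Selection of good mesh radii.** Let `(f_k) ⊂ L¹(0,1)` with `‖f_k‖_{L¹} ≤ C` for all
`k`. For every integer `h ≥ 2` there is a compact set `W_h ⊆ (1/h, 1)` with
`ℒ¹(W_h) ≥ 1 - (C+2)/h` such that for a.e. `ρ ∈ W_h` and every `k` there is `k' > k` with
`|f_{k'}(ρ)| ≤ h`. -/
theorem good_radii_selection (C : ℝ) (f : ℕ → ℝ → ℝ)
    (hint : ∀ k, IntegrableOn (f k) (Ioo (0 : ℝ) 1) volume)
    (hbd : ∀ k, (∫ x in Ioo (0 : ℝ) 1, |f k x|) ≤ C) :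
    ∀ h : ℕ, 2 ≤ h → ∃ W : Set ℝ, IsCompact W ∧ W ⊆ Ioo (1 / (h : ℝ)) 1 ∧
      ENNReal.ofReal (1 - (C + 2) / (h : ℝ)) ≤ volume W ∧
      ∀ᵐ ρ ∂(volume.restrict W), ∀ k : ℕ, ∃ k', k < k' ∧ |f k' ρ| ≤ (h : ℝ) := by
  intro h hh
  have hhpos : (0 : ℝ) < (h : ℝ) := by
    have : (0 : ℕ) < h := lt_of_lt_of_le (by norm_num) hh
    exact_mod_cast this
  set ν : Measure ℝ := volume.restrict (Ioo (0 : ℝ) 1) with hν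
  -- measurable representatives
  set g : ℕ → ℝ → ℝ := fun k => ((hint k).aestronglyMeasurable).mk (f k) with hg
  have hgmeas : ∀ k, StronglyMeasurable (g k) := fun k =>
    ((hint k).aestronglyMeasurable).stronglyMeasurable_mk
  have hfg : ∀ k, f k =ᵐ[ν] g k := fun k => ((hint k).aestronglyMeasurable).ae_eq_mk
  have hgint : ∀ k, Integrable (g k) ν := fun k => (hint k).congr (hfg k)
  -- bad level sets
  set A : ℕ → Set ℝ := fun k => {x | (h : ℝ) < |g k x|} with hA
  have hAmeas : ∀ k, MeasurableSet (A k) := fun k =>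
    measurableSet_lt measurable_const (hgmeas k).measurable.abs
  -- Markov bound
  have hmarkov : ∀ k, ν (A k) ≤ ENNReal.ofReal (C / (h : ℝ)) := by
    intro k
    have h1 : ENNReal.ofReal (h : ℝ) * ν (A k) ≤ ∫⁻ x, (‖g k x‖₊ : ℝ≥0∞) ∂ν := by
      refine le_trans (mul_le_mul_right (measure_mono ?_) _)
        (mul_meas_ge_le_lintegral₀ ((hgmeas k).measurable.nnnorm.coe_nnreal_ennreal.aemeasurable)
          (ENNReal.ofReal (h : ℝ)))
      intro x hx
      have : ENNReal.ofReal (h : ℝ) ≤ ENNReal.ofReal |g k x| :=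
        ENNReal.ofReal_le_ofReal (le_of_lt hx)
      show ENNReal.ofReal (h : ℝ) ≤ ‖g k x‖ₑ
      rw [Real.enorm_eq_ofReal_abs]
      exact this
    have h2 : (∫⁻ x, (‖g k x‖₊ : ℝ≥0∞) ∂ν) ≤ ENNReal.ofReal C := by
      rw [show (∫⁻ x, (‖g k x‖₊ : ℝ≥0∞) ∂ν) = ∫⁻ x, ‖g k x‖ₑ ∂ν from rfl, ← ofReal_integral_norm_eq_lintegral_enorm (hgint k)]
      refine ENNReal.ofReal_le_ofReal ?_
      have : (∫ x, ‖g k x‖ ∂ν) = ∫ x, |f k x| ∂ν := by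
        refine integral_congr_ae ?_
        filter_upwards [hfg k] with x hx
        simp [hx, Real.norm_eq_abs]
      rw [this]; exact hbd k
    rw [ENNReal.ofReal_div_of_pos hhpos]
    rw [ENNReal.le_div_iff_mul_le (Or.inl (ENNReal.ofReal_pos.2 hhpos).ne') (Or.inl ENNReal.ofReal_ne_top)]
    calc ν (A k) * ENNReal.ofReal (h : ℝ) = ENNReal.ofReal (h : ℝ) * ν (A k) := mul_comm _ _
      _ ≤ _ := le_trans h1 h2
  -- bad set
  set I : ℕ → Set ℝ := fun k => ⋂ k', ⋂ (_ : k < k'), A k' with hI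
  set B : Set ℝ := ⋃ k, I k with hB
  have hImeas : ∀ k, MeasurableSet (I k) := fun k =>
    MeasurableSet.iInter fun k' => MeasurableSet.iInter fun _ => hAmeas k'
  have hBmeas : MeasurableSet B := MeasurableSet.iUnion hImeas
  have hImono : Monotone I := by
    intro a b hab x hx
    simp only [hI, mem_iInter] at hx ⊢
    intro k' hk'
    exact hx k' (lt_of_le_of_lt hab hk')
  have hIsub : ∀ k, I k ⊆ A (k + 1) := by
    intro k x hx
    simp only [hI, mem_iInter] at hx
    exact hx (k + 1) (Nat.lt_succ_self k)
  have hBbound : ν B ≤ ENNReal.ofReal (C / (h : ℝ)) := by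
    rw [hB, hImono.directed_le.measure_iUnion]
    exact iSup_le fun k => le_trans (measure_mono (hIsub k)) (hmarkov (k + 1))
  -- the good set
  have hIooSub : Ioo (1 / (h : ℝ)) 1 ⊆ Ioo (0 : ℝ) 1 := fun x hx =>
    ⟨lt_trans (by positivity) hx.1, hx.2⟩
  set S : Set ℝ := Ioo (1 / (h : ℝ)) 1 \ B with hS
  have hSmeas : MeasurableSet S := measurableSet_Ioo.diff hBmeas
  have hSlow : ENNReal.ofReal (1 - 1 / (h : ℝ)) ≤ volume S + ENNReal.ofReal (C / (h : ℝ)) := by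
    have hsub : Ioo (1 / (h : ℝ)) 1 ⊆ S ∪ (B ∩ Ioo (0 : ℝ) 1) := by
      intro x hx
      by_cases hxB : x ∈ B
      · exact Or.inr ⟨hxB, hIooSub hx⟩
      · exact Or.inl ⟨hx, hxB⟩
    have h1 : volume (Ioo (1 / (h : ℝ)) 1) ≤ volume S + volume (B ∩ Ioo (0 : ℝ) 1) :=
      le_trans (measure_mono hsub) (measure_union_le _ _)
    have h2 : volume (B ∩ Ioo (0 : ℝ) 1) = ν B := (Measure.restrict_apply hBmeas).symm
    have h3 : volume (Ioo (1 / (h : ℝ)) 1) = ENNReal.ofReal (1 - 1 / (h : ℝ)) := by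
      rw [Real.volume_Ioo]
    rw [h3, h2] at h1
    exact le_trans h1 (add_le_add_right hBbound _)
  have hSfin : volume S ≠ ⊤ := by
    refine ne_top_of_le_ne_top ?_ (measure_mono (diff_subset.trans hIooSub))
    simp [Real.volume_Ioo]
  -- inner regularity
  obtain ⟨K, hKS, hKcomp, hKlt⟩ := hSmeas.exists_isCompact_lt_add hSfin
    (ε := ENNReal.ofReal (1 / (h : ℝ))) (ENNReal.ofReal_pos.2 (by positivity)).ne'
  refine ⟨K, hKcomp, hKS.trans diff_subset, ?_, ?_⟩
  · -- measure lower bound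
    by_cases hneg : 1 - (C + 2) / (h : ℝ) ≤ 0
    · simp [ENNReal.ofReal_eq_zero.2 hneg]
    push_neg at hneg
    have hC : 0 ≤ C := le_trans (integral_nonneg fun x => abs_nonneg _) (hbd 0)
    have key : ENNReal.ofReal (1 - (C + 2) / (h : ℝ)) + ENNReal.ofReal ((C + 1) / (h : ℝ))
        ≤ volume K + ENNReal.ofReal ((C + 1) / (h : ℝ)) := by
      have hsum : ENNReal.ofReal (1 - (C + 2) / (h : ℝ)) + ENNReal.ofReal ((C + 1) / (h : ℝ))
          = ENNReal.ofReal (1 - 1 / (h : ℝ)) := by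
        rw [← ENNReal.ofReal_add (le_of_lt hneg) (by positivity)]
        congr 1
        field_simp
        ring
      rw [hsum]
      calc ENNReal.ofReal (1 - 1 / (h : ℝ))
          ≤ volume S + ENNReal.ofReal (C / (h : ℝ)) := hSlow
        _ ≤ (volume K + ENNReal.ofReal (1 / (h : ℝ))) + ENNReal.ofReal (C / (h : ℝ)) :=
            add_le_add_left (le_of_lt hKlt) _
        _ = volume K + (ENNReal.ofReal (1 / (h : ℝ)) + ENNReal.ofReal (C / (h : ℝ))) := by ring
        _ = volume K + ENNReal.ofReal ((C + 1) / (h : ℝ)) := by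
            rw [← ENNReal.ofReal_add (by positivity) (by positivity)]
            congr 2
            field_simp
            ring
    exact (ENNReal.add_le_add_iff_right ENNReal.ofReal_ne_top).1 key
  · -- a.e. property
    set N : Set ℝ := ⋃ k, {x | f k x ≠ g k x} with hN
    have hNnull : ν N = 0 := by
      refine measure_iUnion_null fun k => ?_
      exact hfg k
    have hKIoo : K ⊆ Ioo (0 : ℝ) 1 := (hKS.trans diff_subset).trans hIooSub
    have hNK : volume.restrict K N = 0 := by
      rw [Measure.restrict_apply' hKcomp.measurableSet]
      have hz : volume (N ∩ Ioo (0 : ℝ) 1) = 0 := by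
        rwa [← Measure.restrict_apply' measurableSet_Ioo]
      exact measure_mono_null (inter_subset_inter_right _ hKIoo) hz
    have hae1 : ∀ᵐ ρ ∂(volume.restrict K), ρ ∈ K := ae_restrict_mem hKcomp.measurableSet
    have hae2 : ∀ᵐ ρ ∂(volume.restrict K), ρ ∉ N := by
      rw [ae_iff]
      simpa using hNK
    filter_upwards [hae1, hae2] with ρ hρK hρN k
    have hρB : ρ ∉ B := (hKS hρK).2
    simp only [hB, hI, mem_iUnion, mem_iInter, not_exists, not_forall] at hρB
    obtain ⟨k', hk', hk'A⟩ := hρB k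
    have hfge : f k' ρ = g k' ρ := by
      by_contra hne
      exact hρN (mem_iUnion.2 ⟨k', hne⟩)
    refine ⟨k', hk', ?_⟩
    rw [hfge]
    simpa [hA, not_lt] using hk'A
end
end

section
/- Let n ≥ 1, p ∈ [1, +∞), q ∈ (−∞,1], ε ∈ (0,1), and let Ω ⊂ Q_{1−ε}(0) ⊂ ℝⁿ be an open, bounded Lipschitz set; let μ := f·ℒⁿ with f(x) := (1/2 − ‖x‖_∞)^q. For α ∈ (1, +∞) define P_α V(x) := α^{n−1} V(αx) for x ∈ α^{−1}Ω and P_α V := 0 on Ω ∖ α^{−1}Ω, for V ∈ L^p(Ω, μ; ℝⁿ). Then: (1) there is a constant C > 0 depending only on q and p such that ‖P_α V‖_{L^p(Ω,μ)} ≤ C·α^{n−1−n/p}·‖V‖_{L^p(Ω,μ)} for every α ∈ (1,+∞) with |1 − α^{−1}| ≤ ε; (2) for every V ∈ L^p(Ω, μ; ℝⁿ), ‖P_α V − V‖_{L^p(Ω,μ)} → 0 as α → 1⁺. -/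
open MeasureTheory Filter Topology Set
open scoped ENNReal InnerProductSpace NNReal Classical

noncomputable section

/-- `ℝⁿ` with the Euclidean inner product. -/
abbrev Euc (n : ℕ) : Type := EuclideanSpace ℝ (Fin n)

/-- The sup norm `‖x‖_∞` on `ℝⁿ`. -/
def supNorm {n : ℕ} (x : Euc n) : ℝ := ⨆ i, |x i|

/-- `Q_ρ(x₀)`: the open cube of edge length `ρ` centered at `x₀`. -/
def cube {n : ℕ} (x₀ : Euc n) (ρ : ℝ) : Set (Euc n) := {x | supNorm (x - x₀) < ρ / 2}

/-- The closed face of `∂Q_ρ(x₀)` in the positive `i`-th direction. -/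
def facePos {n : ℕ} (x₀ : Euc n) (ρ : ℝ) (i : Fin n) : Set (Euc n) :=
  {x | x i - x₀ i = ρ / 2 ∧ ∀ j, |x j - x₀ j| ≤ ρ / 2}

/-- The closed face of `∂Q_ρ(x₀)` in the negative `i`-th direction. -/
def faceNeg {n : ℕ} (x₀ : Euc n) (ρ : ℝ) (i : Fin n) : Set (Euc n) :=
  {x | x i - x₀ i = -(ρ / 2) ∧ ∀ j, |x j - x₀ j| ≤ ρ / 2}

/-- The flux `∫_{∂Q_ρ(x₀)} V · ν dℋ^{n-1}` of `V` through the boundary of the cube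
`Q_ρ(x₀)`, written as a sum over the faces. -/
def cubeFlux {n : ℕ} (V : Euc n → Euc n) (x₀ : Euc n) (ρ : ℝ) : ℝ :=
  ∑ i : Fin n, ((∫ x in facePos x₀ ρ i, V x i ∂μH[(n : ℝ) - 1])
    - ∫ x in faceNeg x₀ ρ i, V x i ∂μH[(n : ℝ) - 1])

/-- `x` is a Lebesgue point of `V` (with respect to the Lebesgue measure). -/
def IsLebesguePoint {n : ℕ} {F : Type} [NormedAddCommGroup F] (V : Euc n → F) (x : Euc n) :
    Prop :=
  Tendsto (fun r : ℝ => ⨍ y in Metric.ball x r, ‖V y - V x‖ ∂volume) (𝓝[>] 0) (𝓝 0)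

/-- The slice `∂Q_ρ(x₀)` is good for `V`: `ℋ^{n-1}`-a.e. point of `∂Q_ρ(x₀)` is a Lebesgue
point of `V`, the restriction of `V` to `∂Q_ρ(x₀)` is in `L^p(∂Q_ρ(x₀), ℋ^{n-1})`, and the
flux of `V` through `∂Q_ρ(x₀)` is an integer. -/
def GoodSlice {n : ℕ} (p : ℝ) (V : Euc n → Euc n) (x₀ : Euc n) (ρ : ℝ) : Prop :=
  (∀ᵐ x ∂(μH[(n : ℝ) - 1].restrict (frontier (cube x₀ ρ))), IsLebesguePoint V x)
  ∧ MemLp V (ENNReal.ofReal p) (μH[(n : ℝ) - 1].restrict (frontier (cube x₀ ρ)))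
  ∧ ∃ z : ℤ, cubeFlux V x₀ ρ = z

/-- The integer-valued fluxes condition defining `L^p_ℤ(Q₁(0))`. -/
def HasIntegerFluxes {n : ℕ} (p : ℝ) (V : Euc n → Euc n) : Prop :=
  ∀ x₀ ∈ cube (0 : Euc n) 1,
    ∀ᵐ ρ ∂(volume.restrict (Ioo (0 : ℝ) (1 - 2 * supNorm x₀))), GoodSlice p V x₀ ρ

/-- The weighted measure `μ = (1/2 - ‖x‖_∞)^q · ℒⁿ` on `Q₁(0)`. -/
def cubeMeasure (q : ℝ) (n : ℕ) : Measure (Euc n) :=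
  (volume.withDensity fun x => ENNReal.ofReal ((1 / 2 - supNorm x) ^ q)).restrict
    (cube (0 : Euc n) 1)

/-- `φ` is a smooth test function compactly supported in `Ω`. -/
def IsTestFun {n : ℕ} (Ω : Set (Euc n)) (φ : Euc n → ℝ) : Prop :=
  ContDiff ℝ (⊤ : ℕ∞) φ ∧ HasCompactSupport φ ∧ tsupport φ ⊆ Ω

/-- `V ∈ L^p_R(Q₁(0), μ)`: `V ∈ L^p(μ)`, `V` is smooth outside a finite set `S ⊆ Q₁(0)` and
the distributional divergence of `V` on `Q₁(0)` is a finite sum of Dirac deltas with integer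
coefficients supported on `S`. -/
def MemLpR {n : ℕ} (p : ℝ) (μ : Measure (Euc n)) (V : Euc n → Euc n) : Prop :=
  MemLp V (ENNReal.ofReal p) μ ∧
  ∃ S : Finset (Euc n), ↑S ⊆ cube (0 : Euc n) 1 ∧
    ContDiffOn ℝ (⊤ : ℕ∞) V (cube (0 : Euc n) 1 \ ↑S) ∧
    ∃ a : Euc n → ℤ, ∀ φ : Euc n → ℝ, IsTestFun (cube (0 : Euc n) 1) φ →
      ∫ x in cube (0 : Euc n) 1, ⟪V x, gradient φ x⟫_ℝ ∂volume = -∑ x ∈ S, (a x : ℝ) * φ x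

/-- `Ω ⊆ ℝⁿ` is a (bounded) Lipschitz domain: it is open, bounded, and near every boundary
point, after an isometric linear change of coordinates `ℝⁿ ≃ ℝ^{n-1} × ℝ`, the set `Ω` is
the subgraph of a Lipschitz function `g : ℝ^{n-1} → ℝ` and its topological boundary is the
graph of `g`. -/
def IsLipschitzDomain {n : ℕ} (Ω : Set (Euc n)) : Prop :=
  IsOpen Ω ∧ Bornology.IsBounded Ω ∧
    ∀ x ∈ frontier Ω,
      ∃ (e : Euc n ≃ₗᵢ[ℝ] WithLp 2 (EuclideanSpace ℝ (Fin (n - 1)) × ℝ))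
        (g : EuclideanSpace ℝ (Fin (n - 1)) → ℝ) (K : ℝ≥0) (r : ℝ),
        LipschitzWith K g ∧ 0 < r ∧
        (∀ y ∈ Metric.ball x r,
          (y ∈ Ω ↔ ((WithLp.equiv 2 _) (e y)).2 < g ((WithLp.equiv 2 _) (e y)).1)) ∧
        (∀ y ∈ Metric.ball x r,
          (y ∈ frontier Ω ↔ ((WithLp.equiv 2 _) (e y)).2 = g ((WithLp.equiv 2 _) (e y)).1))

/-- The weighted measure `(1/2 - ‖x‖_∞)^q ℒⁿ` restricted to `Ω`. -/
def weightedMeasure (q : ℝ) {n : ℕ} (Ω : Set (Euc n)) : Measure (Euc n) :=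
  (volume.withDensity fun x => ENNReal.ofReal ((1 / 2 - supNorm x) ^ q)).restrict Ω

/-- The dilation operator `P_α V(x) = α^{n-1} V(αx)` on `α⁻¹Ω`, extended by `0`. -/
def dilation {n : ℕ} (Ω : Set (Euc n)) (α : ℝ) (V : Euc n → Euc n) : Euc n → Euc n :=
  fun x => if α • x ∈ Ω then (α ^ (n - 1)) • V (α • x) else 0

namespace DilAux

variable {n : ℕ}

lemma measurable_supNorm : Measurable (supNorm (n := n)) :=
  Measurable.iSup fun i => (by fun_prop : Measurable fun x : Euc n => |x i|)

lemma supNorm_nonneg (hn : 0 < n) (x : Euc n) : 0 ≤ supNorm x := by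
  have : Nonempty (Fin n) := Fin.pos_iff_nonempty.1 hn
  have i : Fin n := Classical.arbitrary _
  exact le_trans (abs_nonneg (x i))
    (le_ciSup (f := fun i => |x i|) (Set.Finite.bddAbove (Set.finite_range _)) i)

lemma supNorm_smul (c : ℝ) (hc : 0 ≤ c) (x : Euc n) : supNorm (c • x) = c * supNorm x := by
  unfold supNorm
  simp only [PiLp.smul_apply, smul_eq_mul, abs_mul, abs_of_nonneg hc]
  by_cases h : Nonempty (Fin n)
  · exact (Real.mul_iSup_of_nonneg hc _).symm
  · simp [iSup, Set.range_eq_empty_iff.2 (by simpa using h), Real.sSup_empty]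

lemma mem_cube_zero {ρ : ℝ} {x : Euc n} : x ∈ cube (0 : Euc n) ρ ↔ supNorm x < ρ / 2 := by
  simp [cube]

/-- The weight function. -/
def wt (q : ℝ) (x : Euc n) : ℝ≥0∞ := ENNReal.ofReal ((1 / 2 - supNorm x) ^ q)

lemma measurable_wt (q : ℝ) : Measurable (wt q (n := n)) :=
  ENNReal.measurable_ofReal.comp ((measurable_const.sub measurable_supNorm).pow measurable_const)

lemma wt_lt_top {q : ℝ} {x : Euc n} : wt q x < ∞ := ENNReal.ofReal_lt_top

lemma wt_pos {q ε : ℝ} (hε : 0 < ε) {Ω : Set (Euc n)} (hΩc : Ω ⊆ cube 0 (1 - ε))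
    {x : Euc n} (hx : x ∈ Ω) : 0 < wt q x := by
  have hs : supNorm x < (1 - ε) / 2 := mem_cube_zero.1 (hΩc hx)
  exact ENNReal.ofReal_pos.2 (Real.rpow_pos_of_pos (by linarith) q)

lemma weight_ratio {q ε αi s : ℝ} (hq : q ≤ 1) (hε : 0 < ε)
    (hαi : 0 ≤ αi) (hαi1 : αi ≤ 1) (hαε : 1 - αi ≤ ε) (hs : 0 ≤ s) (hs' : s < (1 - ε) / 2) :
    (1 / 2 - αi * s) ^ q ≤ 2 * (1 / 2 - s) ^ q := by
  have ha : 0 < 1 / 2 - s := by linarith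
  have hs2 : s ≤ 1 / 2 := by linarith
  have hprod : s * (1 - αi) ≤ (1 / 2) * ε :=
    mul_le_mul hs2 hαε (by linarith) (by norm_num)
  have h1 : 1 / 2 - s ≤ 1 / 2 - αi * s := by nlinarith
  have h2 : 1 / 2 - αi * s ≤ 2 * (1 / 2 - s) := by nlinarith
  rcases le_or_gt 0 q with hq0 | hq0
  · calc (1 / 2 - αi * s) ^ q ≤ (2 * (1 / 2 - s)) ^ q :=
        Real.rpow_le_rpow (by linarith) h2 hq0
      _ = 2 ^ q * (1 / 2 - s) ^ q := Real.mul_rpow (by norm_num) ha.le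
      _ ≤ 2 * (1 / 2 - s) ^ q := by
        have h2q : (2 : ℝ) ^ q ≤ 2 := by
          calc (2 : ℝ) ^ q ≤ (2 : ℝ) ^ (1 : ℝ) :=
            Real.rpow_le_rpow_of_exponent_le one_le_two hq
          _ = 2 := Real.rpow_one 2
        exact mul_le_mul_of_nonneg_right h2q (Real.rpow_nonneg ha.le q)
  · calc (1 / 2 - αi * s) ^ q ≤ (1 / 2 - s) ^ q :=
        Real.rpow_le_rpow_of_nonpos ha h1 hq0.le
      _ ≤ 2 * (1 / 2 - s) ^ q := by
        nlinarith [Real.rpow_nonneg ha.le q, Real.rpow_nonneg (show (0:ℝ) ≤ 1/2 - αi*s by nlinarith) q]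

lemma wt_smul_le {q ε α : ℝ} (hn : 0 < n) (hq : q ≤ 1) (hε : 0 < ε) (hα : 1 < α)
    (hαε : 1 - α⁻¹ ≤ ε) {Ω : Set (Euc n)} (hΩc : Ω ⊆ cube 0 (1 - ε)) {y : Euc n} (hy : y ∈ Ω) :
    wt q (α⁻¹ • y) ≤ 2 * wt q y := by
  have h0α : (0 : ℝ) < α⁻¹ := by positivity
  have hαi1 : α⁻¹ ≤ 1 := by
    rw [inv_le_one_iff₀]; right; exact hα.le
  have hs := supNorm_nonneg hn y
  have hs' : supNorm y < (1 - ε) / 2 := mem_cube_zero.1 (hΩc hy)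
  rw [wt, wt, supNorm_smul _ h0α.le]
  calc ENNReal.ofReal ((1 / 2 - α⁻¹ * supNorm y) ^ q)
      ≤ ENNReal.ofReal (2 * (1 / 2 - supNorm y) ^ q) :=
        ENNReal.ofReal_le_ofReal (weight_ratio hq hε h0α.le hαi1 hαε hs hs')
    _ = 2 * ENNReal.ofReal ((1 / 2 - supNorm y) ^ q) := by
        rw [ENNReal.ofReal_mul (by norm_num)]
        norm_num

lemma lintegral_weighted {q : ℝ} {Ω : Set (Euc n)} (hΩ : MeasurableSet Ω) (h : Euc n → ℝ≥0∞) :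
    ∫⁻ x, h x ∂(weightedMeasure q Ω) = ∫⁻ x in Ω, wt q x * h x ∂volume := by
  rw [weightedMeasure, restrict_withDensity hΩ]
  rw [show ((volume.restrict Ω).withDensity fun x : Euc n =>
      ENNReal.ofReal ((1 / 2 - supNorm x) ^ q)) = (volume.restrict Ω).withDensity (wt q) from rfl]
  rw [lintegral_withDensity_eq_lintegral_mul_non_measurable _ (measurable_wt q)
      (ae_of_all _ fun _ => wt_lt_top)]
  rfl

lemma weighted_ac {q : ℝ} {Ω : Set (Euc n)} : weightedMeasure q Ω ≪ volume :=
  (Measure.absolutelyContinuous_of_le Measure.restrict_le_self).trans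
    (withDensity_absolutelyContinuous _ _)

end DilAux

namespace DilAux

variable {n : ℕ}

lemma key {q ε α : ℝ} (hn : 0 < n) (hq : q ≤ 1) (hε : 0 < ε) (hα : 1 < α) (hαε : 1 - α⁻¹ ≤ ε)
    {Ω : Set (Euc n)} (hΩ : MeasurableSet Ω) (hΩc : Ω ⊆ cube 0 (1 - ε))
    {g : Euc n → ℝ≥0∞} (hg : Measurable g) :
    ∫⁻ x in Ω, wt q x * (if α • x ∈ Ω then g (α • x) else 0) ∂volume
      ≤ ENNReal.ofReal ((α ^ n)⁻¹) * (2 * ∫⁻ x in Ω, wt q x * g x ∂volume) := by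
  have hα0 : (0 : ℝ) < α := lt_trans one_pos hα
  set F : Euc n → ℝ≥0∞ := Ω.indicator (fun y => wt q (α⁻¹ • y) * g y) with hF
  have hFm : Measurable F :=
    (((measurable_wt q).comp (measurable_const_smul α⁻¹)).mul hg).indicator hΩ
  have h1 : ∀ x : Euc n, wt q x * (if α • x ∈ Ω then g (α • x) else 0) = F (α • x) := by
    intro x
    by_cases h : α • x ∈ Ω
    · rw [hF, if_pos h, Set.indicator_of_mem h]
      rw [smul_smul, inv_mul_cancel₀ hα0.ne', one_smul]
    · rw [hF, if_neg h, Set.indicator_of_notMem h, mul_zero]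
  calc ∫⁻ x in Ω, wt q x * (if α • x ∈ Ω then g (α • x) else 0) ∂volume
      ≤ ∫⁻ x, F (α • x) ∂volume := by
        simp_rw [h1]; exact setLIntegral_le_lintegral _ _
    _ = ∫⁻ y, F y ∂(Measure.map (α • ·) volume) :=
        (lintegral_map hFm (measurable_const_smul α)).symm
    _ = ENNReal.ofReal ((α ^ n)⁻¹) * ∫⁻ y, F y ∂volume := by
        rw [Measure.map_addHaar_smul volume hα0.ne', finrank_euclideanSpace_fin,
          lintegral_smul_measure, abs_of_pos (by positivity), smul_eq_mul]
    _ ≤ ENNReal.ofReal ((α ^ n)⁻¹) * (2 * ∫⁻ x in Ω, wt q x * g x ∂volume) := by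
        refine mul_le_mul_right ?_ _
        rw [hF, lintegral_indicator hΩ]
        calc ∫⁻ y in Ω, wt q (α⁻¹ • y) * g y ∂volume
            ≤ ∫⁻ y in Ω, 2 * wt q y * g y ∂volume := by
              refine setLIntegral_mono' hΩ fun y hy => ?_
              exact mul_le_mul_left (wt_smul_le hn hq hε hα hαε hΩc hy) _
          _ = 2 * ∫⁻ y in Ω, wt q y * g y ∂volume := by
              simp_rw [mul_assoc]
              exact lintegral_const_mul' _ _ (by norm_num)

lemma dilation_eq_indicator (Ω : Set (Euc n)) (α : ℝ) (V : Euc n → Euc n) :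
    dilation Ω α V = fun x =>
      ((α • ·) ⁻¹' Ω).indicator (fun x => ((α : ℝ) ^ (n - 1)) • V (α • x)) x := by
  funext x
  by_cases h : α • x ∈ Ω <;>
    simp [dilation, Set.indicator_apply, Set.mem_preimage, h]

lemma stronglyMeasurable_dilation {Ω : Set (Euc n)} (hΩ : MeasurableSet Ω) (α : ℝ)
    {V : Euc n → Euc n} (hV : StronglyMeasurable V) : StronglyMeasurable (dilation Ω α V) := by
  rw [dilation_eq_indicator]
  exact ((hV.comp_measurable (measurable_const_smul α)).const_smul ((α : ℝ) ^ (n - 1))).indicator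
    ((measurable_const_smul α) hΩ)

lemma isFiniteMeasure_weighted {q ε : ℝ} (hn : 0 < n) (hε : 0 < ε) {Ω : Set (Euc n)}
    (hΩ : MeasurableSet Ω) (hΩb : Bornology.IsBounded Ω) (hΩc : Ω ⊆ cube 0 (1 - ε)) :
    IsFiniteMeasure (weightedMeasure q Ω) := by
  constructor
  have h1 : weightedMeasure q Ω Set.univ = ∫⁻ x in Ω, wt q x ∂volume := by
    rw [weightedMeasure, Measure.restrict_apply MeasurableSet.univ, Set.univ_inter,
      withDensity_apply _ hΩ]
    rfl
  rw [h1]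
  set B : ℝ := max ((ε / 2) ^ q) ((1 / 2 : ℝ) ^ q) with hB
  have hbd : ∀ x ∈ Ω, wt q x ≤ ENNReal.ofReal B := by
    intro x hx
    have hs' : supNorm x < (1 - ε) / 2 := mem_cube_zero.1 (hΩc hx)
    refine ENNReal.ofReal_le_ofReal ?_
    have hs0 := supNorm_nonneg hn x
    rcases le_or_gt 0 q with h | h
    · refine le_max_of_le_right (Real.rpow_le_rpow (by linarith) (by linarith) h)
    · refine le_max_of_le_left (Real.rpow_le_rpow_of_nonpos (by linarith) (by linarith) h.le)
  calc ∫⁻ x in Ω, wt q x ∂volume ≤ ∫⁻ _ in Ω, ENNReal.ofReal B ∂volume :=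
        setLIntegral_mono' hΩ hbd
    _ = ENNReal.ofReal B * volume Ω := by rw [setLIntegral_const]
    _ < ∞ := ENNReal.mul_lt_top ENNReal.ofReal_lt_top hΩb.measure_lt_top

lemma dilation_congr_ae {q ε : ℝ} (hε : 0 < ε) {Ω : Set (Euc n)} (hΩ : MeasurableSet Ω)
    (hΩc : Ω ⊆ cube 0 (1 - ε)) {α : ℝ} (hα : 0 < α) {V V₁ : Euc n → Euc n}
    (h : V =ᵐ[weightedMeasure q Ω] V₁) :
    dilation Ω α V =ᵐ[weightedMeasure q Ω] dilation Ω α V₁ := by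
  have hnull : weightedMeasure q Ω {y | V y ≠ V₁ y} = 0 := h
  obtain ⟨N, hNsup, hNm, hN0⟩ := exists_measurable_superset_of_null hnull
  set T : Set (Euc n) := N ∩ Ω with hT
  have hTm : MeasurableSet T := hNm.inter hΩ
  have hT0 : weightedMeasure q Ω T = 0 :=
    le_antisymm (hN0 ▸ measure_mono Set.inter_subset_left) (zero_le)
  -- vol T = 0
  have hTvol : volume T = 0 := by
    have h2 : ∫⁻ x in T, wt q x ∂volume = 0 := by
      have : weightedMeasure q Ω T = ∫⁻ x in T, wt q x ∂volume := by
        rw [weightedMeasure, Measure.restrict_apply hTm,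
          Set.inter_eq_self_of_subset_left Set.inter_subset_right,
          withDensity_apply _ hTm]
        rfl
      rw [← this, hT0]
    have h3 := (setLIntegral_eq_zero_iff hTm (measurable_wt q)).1 h2
    have h5 : volume {x : Euc n | ¬ (x ∈ T → wt q x = 0)} = 0 := ae_iff.1 h3
    refine measure_mono_null (fun x hx => ?_) h5
    exact fun himp => absurd (himp hx) (wt_pos hε hΩc hx.2).ne'
  have hpre : volume ((α • ·) ⁻¹' T) = 0 := by
    have hmap : Measure.map (α • ·) (volume : Measure (Euc n)) T = volume ((α • ·) ⁻¹' T) :=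
      Measure.map_apply (measurable_const_smul α) hTm
    rw [Measure.map_addHaar_smul volume hα.ne', finrank_euclideanSpace_fin] at hmap
    rw [← hmap, Measure.smul_apply, hTvol, smul_zero]
  have hsub : {x | dilation Ω α V x ≠ dilation Ω α V₁ x} ⊆ (α • ·) ⁻¹' T := by
    intro x hx
    simp only [Set.mem_setOf_eq] at hx
    simp only [Set.mem_preimage]
    by_contra hmem
    apply hx
    simp only [dilation]
    by_cases hin : α • x ∈ Ω
    · rw [if_pos hin, if_pos hin]
      have hVeq : V (α • x) = V₁ (α • x) := by
        by_contra hne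
        exact hmem ⟨hNsup hne, hin⟩
      rw [hVeq]
    · rw [if_neg hin, if_neg hin]
  have hvol0 : volume {x | dilation Ω α V x ≠ dilation Ω α V₁ x} = 0 :=
    measure_mono_null hsub hpre
  have hvol : dilation Ω α V =ᵐ[volume] dilation Ω α V₁ := by
    rw [Filter.eventuallyEq_iff_exists_mem]
    exact ⟨_, (ae_iff.2 hvol0 : _), fun x hx => hx⟩
  exact hvol.filter_mono (weighted_ac (q := q) (Ω := Ω)).ae_le

end DilAux

namespace DilAux

variable {n : ℕ}

lemma real_const_bound {p α : ℝ} (hn : 1 ≤ n) (hp : 1 ≤ p) (hα : 1 < α) :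
    ((α ^ (n - 1) : ℝ) ^ p * ((α : ℝ) ^ n)⁻¹ * 2) ^ (1 / p)
      ≤ 2 * α ^ ((n : ℝ) - 1 - (n : ℝ) / p) := by
  have hα0 : (0 : ℝ) < α := lt_trans one_pos hα
  have hp0 : 0 < p := lt_of_lt_of_le one_pos hp
  have h1 : (α ^ (n - 1) : ℝ) = α ^ ((n : ℝ) - 1) := by
    rw [← Real.rpow_natCast α (n - 1), Nat.cast_sub hn, Nat.cast_one]
  have h2 : ((α : ℝ) ^ n)⁻¹ = α ^ (-(n : ℝ)) := by
    rw [← Real.rpow_natCast α n, ← Real.rpow_neg hα0.le]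
  rw [h1, h2, ← Real.rpow_mul hα0.le, ← Real.rpow_add hα0,
    Real.mul_rpow (by positivity) (by norm_num), ← Real.rpow_mul hα0.le]
  have he : (((n : ℝ) - 1) * p + -(n : ℝ)) * (1 / p) = (n : ℝ) - 1 - (n : ℝ) / p := by
    field_simp
    ring
  rw [he]
  have h2p : (2 : ℝ) ^ (1 / p) ≤ 2 := by
    calc (2 : ℝ) ^ (1 / p) ≤ (2 : ℝ) ^ (1 : ℝ) :=
      Real.rpow_le_rpow_of_exponent_le one_le_two (by
        rw [div_le_one hp0]; exact hp)
    _ = 2 := Real.rpow_one 2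
  calc α ^ ((n : ℝ) - 1 - (n : ℝ) / p) * 2 ^ (1 / p)
      ≤ α ^ ((n : ℝ) - 1 - (n : ℝ) / p) * 2 :=
        mul_le_mul_of_nonneg_left h2p (Real.rpow_nonneg hα0.le _)
    _ = 2 * α ^ ((n : ℝ) - 1 - (n : ℝ) / p) := mul_comm _ _

lemma part1_bound {q ε p α : ℝ} (hn : 1 ≤ n) (hq : q ≤ 1) (hp : 1 ≤ p) (hε0 : 0 < ε)
    {Ω : Set (Euc n)} (hΩ : MeasurableSet Ω) (hΩc : Ω ⊆ cube 0 (1 - ε))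
    (hα : 1 < α) (hαε : |1 - α⁻¹| ≤ ε) {V : Euc n → Euc n}
    (hV : MemLp V (ENNReal.ofReal p) (weightedMeasure q Ω)) :
    eLpNorm (dilation Ω α V) (ENNReal.ofReal p) (weightedMeasure q Ω)
      ≤ ENNReal.ofReal (2 * α ^ ((n : ℝ) - 1 - (n : ℝ) / p)) *
        eLpNorm V (ENNReal.ofReal p) (weightedMeasure q Ω) := by
  have hn0 : 0 < n := hn
  have hp0 : 0 < p := lt_of_lt_of_le one_pos hp
  have hα0 : (0 : ℝ) < α := lt_trans one_pos hα
  have hP0 : ENNReal.ofReal p ≠ 0 := (ENNReal.ofReal_pos.2 hp0).ne'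
  have hP1 : ENNReal.ofReal p ≠ ∞ := ENNReal.ofReal_ne_top
  have hPt : (ENNReal.ofReal p).toReal = p := ENNReal.toReal_ofReal hp0.le
  have hαε' : 1 - α⁻¹ ≤ ε := by
    rwa [abs_of_pos (by simp only [sub_pos]; exact inv_lt_one_of_one_lt₀ hα)] at hαε
  have hV₁m : StronglyMeasurable (hV.1.mk V) := hV.1.stronglyMeasurable_mk
  set V₁ : Euc n → Euc n := hV.1.mk V with hV₁def
  have hVeq : V =ᵐ[weightedMeasure q Ω] V₁ := hV.1.ae_eq_mk
  rw [eLpNorm_congr_ae (dilation_congr_ae hε0 hΩ hΩc hα0 hVeq), eLpNorm_congr_ae hVeq,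
    eLpNorm_eq_lintegral_rpow_enorm_toReal hP0 hP1, eLpNorm_eq_lintegral_rpow_enorm_toReal hP0 hP1, hPt]
  simp only [enorm_eq_nnnorm]
  set g : Euc n → ℝ≥0∞ := fun y => (‖V₁ y‖₊ : ℝ≥0∞) ^ p with hgdef
  have hgm : Measurable g :=
    (ENNReal.continuous_rpow_const.measurable).comp hV₁m.measurable.enorm
  set c₀ : ℝ≥0∞ := ENNReal.ofReal ((α ^ (n - 1) : ℝ) ^ p) with hc₀
  have hpoint : ∀ x : Euc n,
      (‖dilation Ω α V₁ x‖₊ : ℝ≥0∞) ^ p = c₀ * (if α • x ∈ Ω then g (α • x) else 0) := by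
    intro x
    by_cases h : α • x ∈ Ω
    · simp only [dilation, if_pos h]
      rw [nnnorm_smul, ENNReal.coe_mul, ENNReal.mul_rpow_of_nonneg _ _ hp0.le]
      congr 1
      rw [← enorm_eq_nnnorm, Real.enorm_eq_ofReal (pow_nonneg hα0.le _),
        ENNReal.ofReal_rpow_of_nonneg (pow_nonneg hα0.le _) hp0.le, hc₀]
    · simp only [dilation, if_neg h, nnnorm_zero, ENNReal.coe_zero, mul_zero]
      exact ENNReal.zero_rpow_of_pos hp0
  have hL : ∫⁻ x, (‖dilation Ω α V₁ x‖₊ : ℝ≥0∞) ^ p ∂(weightedMeasure q Ω)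
      ≤ ENNReal.ofReal ((α ^ (n - 1) : ℝ) ^ p * ((α : ℝ) ^ n)⁻¹ * 2) *
        ∫⁻ x, (‖V₁ x‖₊ : ℝ≥0∞) ^ p ∂(weightedMeasure q Ω) := by
    rw [lintegral_weighted hΩ, lintegral_weighted hΩ]
    simp_rw [hpoint]
    have hcomm : ∀ x : Euc n, wt q x * (c₀ * (if α • x ∈ Ω then g (α • x) else 0))
        = c₀ * (wt q x * (if α • x ∈ Ω then g (α • x) else 0)) := fun x => by ring
    simp_rw [hcomm]
    rw [lintegral_const_mul' _ _ (by rw [hc₀]; exact ENNReal.ofReal_ne_top)]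
    calc c₀ * ∫⁻ x in Ω, wt q x * (if α • x ∈ Ω then g (α • x) else 0) ∂volume
        ≤ c₀ * (ENNReal.ofReal ((α ^ n)⁻¹) * (2 * ∫⁻ x in Ω, wt q x * g x ∂volume)) :=
          mul_le_mul_right (key hn0 hq hε0 hα hαε' hΩ hΩc hgm) _
      _ = ENNReal.ofReal ((α ^ (n - 1) : ℝ) ^ p * ((α : ℝ) ^ n)⁻¹ * 2) *
            ∫⁻ x in Ω, wt q x * g x ∂volume := by
          have ha1 : (0:ℝ) ≤ (α ^ (n - 1) : ℝ) ^ p :=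
            Real.rpow_nonneg (pow_nonneg hα0.le _) _
          have ha2 : (0:ℝ) ≤ (α ^ (n - 1) : ℝ) ^ p * ((α : ℝ) ^ n)⁻¹ :=
            mul_nonneg ha1 (inv_nonneg.2 (pow_nonneg hα0.le _))
          rw [ENNReal.ofReal_mul ha2, ENNReal.ofReal_mul ha1, ← hc₀, ENNReal.ofReal_ofNat]
          ring
  refine le_trans (ENNReal.rpow_le_rpow hL (by positivity : (0:ℝ) ≤ 1 / p)) ?_
  rw [ENNReal.mul_rpow_of_nonneg _ _ (by positivity : (0:ℝ) ≤ 1 / p)]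
  refine mul_le_mul_left ?_ _
  have ha1 : (0:ℝ) ≤ (α ^ (n - 1) : ℝ) ^ p :=
    Real.rpow_nonneg (pow_nonneg hα0.le _) _
  have hD : (0:ℝ) ≤ (α ^ (n - 1) : ℝ) ^ p * ((α : ℝ) ^ n)⁻¹ * 2 :=
    mul_nonneg (mul_nonneg ha1 (inv_nonneg.2 (pow_nonneg hα0.le _))) (by norm_num)
  rw [ENNReal.ofReal_rpow_of_nonneg hD (by positivity : (0:ℝ) ≤ 1 / p)]
  exact ENNReal.ofReal_le_ofReal (real_const_bound hn hp hα)

end DilAux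

namespace DilAux

variable {n : ℕ}

lemma norm_dilation_le {Ω : Set (Euc n)} {α M : ℝ} (hα : α ∈ Ioo (1:ℝ) 2) {g : Euc n → Euc n}
    (hM : ∀ x, ‖g x‖ ≤ M) (x : Euc n) : ‖dilation Ω α g x‖ ≤ 2 ^ n * M := by
  have hM0 : 0 ≤ M := le_trans (norm_nonneg _) (hM 0)
  rw [dilation]
  split_ifs with h
  · rw [norm_smul, Real.norm_eq_abs, abs_of_pos (pow_pos (by linarith [hα.1]) _)]
    have hαn : α ^ (n - 1) ≤ 2 ^ n :=
      le_trans (pow_le_pow_left₀ (by linarith [hα.1]) hα.2.le _)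
        (pow_le_pow_right₀ one_le_two (Nat.sub_le n 1))
    exact mul_le_mul hαn (hM _) (norm_nonneg _) (by positivity)
  · simp only [norm_zero]
    positivity

lemma part2_cont {q ε p : ℝ} (hn : 1 ≤ n) (hp : 1 ≤ p) (hε0 : 0 < ε)
    {Ω : Set (Euc n)} (hΩo : IsOpen Ω) (hΩb : Bornology.IsBounded Ω)
    (hΩc : Ω ⊆ cube 0 (1 - ε)) {g : Euc n → Euc n} (hg : Continuous g)
    (hgb : ∃ M, ∀ x, ‖g x‖ ≤ M) :
    Tendsto (fun α : ℝ => eLpNorm (fun x => dilation Ω α g x - g x) (ENNReal.ofReal p)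
      (weightedMeasure q Ω)) (𝓝[>] 1) (𝓝 0) := by
  have hΩm := hΩo.measurableSet
  have hp0 : 0 < p := lt_of_lt_of_le one_pos hp
  have hP0 : ENNReal.ofReal p ≠ 0 := (ENNReal.ofReal_pos.2 hp0).ne'
  have hP1 : ENNReal.ofReal p ≠ ∞ := ENNReal.ofReal_ne_top
  have hPt : (ENNReal.ofReal p).toReal = p := ENNReal.toReal_ofReal hp0.le
  obtain ⟨M, hM⟩ := hgb
  have hM0 : 0 ≤ M := le_trans (norm_nonneg _) (hM 0)
  haveI : IsFiniteMeasure (weightedMeasure q Ω) :=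
    isFiniteMeasure_weighted hn hε0 hΩm hΩb hΩc
  set B : ℝ := 2 ^ n * M + M with hB
  have hB0 : 0 ≤ B := by positivity
  have hform : ∀ α : ℝ, eLpNorm (fun x => dilation Ω α g x - g x)
        (ENNReal.ofReal p) (weightedMeasure q Ω)
      = (∫⁻ x, (‖dilation Ω α g x - g x‖₊ : ℝ≥0∞) ^ p ∂(weightedMeasure q Ω)) ^ (1 / p) := by
    intro α
    simp only [eLpNorm_eq_lintegral_rpow_enorm_toReal hP0 hP1, hPt, enorm_eq_nnnorm]
  simp_rw [hform]
  suffices hΦ : Tendsto (fun α : ℝ =>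
      ∫⁻ x, (‖dilation Ω α g x - g x‖₊ : ℝ≥0∞) ^ p ∂(weightedMeasure q Ω)) (𝓝[>] 1) (𝓝 0) by
    have hcmp := ((ENNReal.continuous_rpow_const (y := 1 / p)).tendsto 0).comp hΦ
    have h0 : ((0:ℝ≥0∞)) ^ (1 / p) = 0 := ENNReal.zero_rpow_of_pos (by positivity)
    rw [← h0]
    exact hcmp
  rw [tendsto_iff_seq_tendsto]
  intro u hu
  have h1 : ∀ᶠ k in atTop, u k ∈ Ioo (1:ℝ) 2 :=
    hu (Ioo_mem_nhdsGT_of_mem ⟨le_refl (1:ℝ), one_lt_two⟩)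
  set u' : ℕ → ℝ := fun k => if u k ∈ Ioo (1:ℝ) 2 then u k else 3/2 with hu'def
  have hu'mem : ∀ k, u' k ∈ Ioo (1:ℝ) 2 := by
    intro k
    by_cases h : u k ∈ Ioo (1:ℝ) 2
    · simp only [hu'def, if_pos h]
      exact h
    · simp only [hu'def, if_neg h]
      constructor <;> norm_num
  have huu' : u =ᶠ[atTop] u' := h1.mono fun k hk => by
    simp only [hu'def]
    rw [if_pos hk]
  have hu' : Tendsto u' atTop (𝓝 1) :=
    ((hu.mono_right nhdsWithin_le_nhds).congr' huu')
  have hcomp : ((fun α => ∫⁻ x, (‖dilation Ω α g x - g x‖₊ : ℝ≥0∞) ^ p ∂(weightedMeasure q Ω)) ∘ u)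
      =ᶠ[atTop] fun k =>
        ∫⁻ x, (‖dilation Ω (u' k) g x - g x‖₊ : ℝ≥0∞) ^ p ∂(weightedMeasure q Ω) :=
    huu'.mono fun k hk => by simp only [Function.comp_apply, hk]
  rw [Filter.tendsto_congr' hcomp]
  have hmeas : ∀ k : ℕ, AEMeasurable
      (fun x => (‖dilation Ω (u' k) g x - g x‖₊ : ℝ≥0∞) ^ p) (weightedMeasure q Ω) := by
    intro k
    exact ((((stronglyMeasurable_dilation hΩm (u' k) hg.stronglyMeasurable).sub
      hg.stronglyMeasurable).measurable.enorm).pow measurable_const).aemeasurable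
  have hbound : ∀ k : ℕ, (fun x => (‖dilation Ω (u' k) g x - g x‖₊ : ℝ≥0∞) ^ p)
      ≤ᵐ[weightedMeasure q Ω] fun _ => ENNReal.ofReal B ^ p := by
    intro k
    refine ae_of_all _ fun x => ?_
    refine ENNReal.rpow_le_rpow ?_ hp0.le
    rw [← enorm_eq_nnnorm, ← ofReal_norm_eq_enorm]
    refine ENNReal.ofReal_le_ofReal ?_
    calc ‖dilation Ω (u' k) g x - g x‖ ≤ ‖dilation Ω (u' k) g x‖ + ‖g x‖ := norm_sub_le _ _
      _ ≤ 2 ^ n * M + M := add_le_add (norm_dilation_le (hu'mem k) hM x) (hM x)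
  have hfin : ∫⁻ _, ENNReal.ofReal B ^ p ∂(weightedMeasure q Ω) ≠ ∞ := by
    rw [lintegral_const]
    exact ENNReal.mul_ne_top (ENNReal.rpow_ne_top_of_nonneg hp0.le ENNReal.ofReal_ne_top)
      (measure_ne_top _ _)
  have hlim : ∀ᵐ x ∂(weightedMeasure q Ω), Tendsto
      (fun k => (‖dilation Ω (u' k) g x - g x‖₊ : ℝ≥0∞) ^ p) atTop (𝓝 0) := by
    have hae : ∀ᵐ x ∂(weightedMeasure q Ω), x ∈ Ω := by
      rw [weightedMeasure]
      exact ae_restrict_mem hΩm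
    refine hae.mono fun x hx => ?_
    have hsm : Tendsto (fun k => u' k • x) atTop (𝓝 x) := by
      have := hu'.smul_const x
      rwa [one_smul] at this
    have hev : ∀ᶠ k in atTop, u' k • x ∈ Ω := hsm (hΩo.mem_nhds hx)
    have hgs : Tendsto (fun k => ((u' k) ^ (n - 1) : ℝ) • g (u' k • x)) atTop (𝓝 (g x)) := by
      have h1' : Tendsto (fun k => ((u' k) ^ (n - 1) : ℝ)) atTop (𝓝 1) := by
        simpa using hu'.pow (n - 1)
      have h2' : Tendsto (fun k => g (u' k • x)) atTop (𝓝 (g x)) :=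
        (hg.tendsto x).comp hsm
      simpa using h1'.smul h2'
    have hdil : Tendsto (fun k => dilation Ω (u' k) g x) atTop (𝓝 (g x)) :=
      Tendsto.congr' (hev.mono fun k hk => by simp [dilation, hk]) hgs
    have hdif : Tendsto (fun k => dilation Ω (u' k) g x - g x) atTop (𝓝 0) := by
      have := hdil.sub (tendsto_const_nhds (x := g x))
      rwa [sub_self] at this
    have h3 : Tendsto (fun k => (‖dilation Ω (u' k) g x - g x‖₊ : ℝ≥0∞)) atTop (𝓝 0) := by
      rw [show (0:ℝ≥0∞) = ((0:ℝ≥0) : ℝ≥0∞) by simp]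
      rw [ENNReal.tendsto_coe]
      simpa [nnnorm_zero] using hdif.nnnorm
    have := ((ENNReal.continuous_rpow_const (y := p)).tendsto 0).comp h3
    simpa [Function.comp_def, ENNReal.zero_rpow_of_pos hp0] using this
  have := tendsto_lintegral_of_dominated_convergence' (μ := weightedMeasure q Ω)
    (bound := fun _ => ENNReal.ofReal B ^ p) hmeas hbound hfin hlim
  simpa [lintegral_zero] using this

end DilAux


/-- **Continuity of the dilation operator in weighted `L^p`.** Let `q ≤ 1`, `p ≥ 1`. There
is a constant `C > 0` depending only on `q` and `p` such that for every `ε ∈ (0,1)` and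
every open, bounded Lipschitz set `Ω ⊆ Q_{1-ε}(0)`: (1) for every `α > 1` with
`|1 - α⁻¹| ≤ ε` the dilation `P_α` is bounded on `L^p(Ω, μ)` with norm at most
`C α^{n-1-n/p}`; and (2) for every `V ∈ L^p(Ω, μ)` we have `P_α V → V` in `L^p(Ω, μ)` as
`α → 1⁺`. -/
theorem dilation_operator_continuity {n : ℕ} (hn : 1 ≤ n) (p q : ℝ) (hp : 1 ≤ p)
    (hq : q ≤ 1) :
    ∃ C > (0 : ℝ), ∀ ε ∈ Ioo (0 : ℝ) 1, ∀ Ω : Set (Euc n),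
      Ω ⊆ cube (0 : Euc n) (1 - ε) → IsLipschitzDomain Ω →
      (∀ α : ℝ, 1 < α → |1 - α⁻¹| ≤ ε → ∀ V : Euc n → Euc n,
        MemLp V (ENNReal.ofReal p) (weightedMeasure q Ω) →
        eLpNorm (dilation Ω α V) (ENNReal.ofReal p) (weightedMeasure q Ω)
          ≤ ENNReal.ofReal (C * α ^ ((n : ℝ) - 1 - (n : ℝ) / p)) *
            eLpNorm V (ENNReal.ofReal p) (weightedMeasure q Ω)) ∧
      (∀ V : Euc n → Euc n, MemLp V (ENNReal.ofReal p) (weightedMeasure q Ω) →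
        Tendsto (fun α : ℝ => eLpNorm (fun x => dilation Ω α V x - V x)
            (ENNReal.ofReal p) (weightedMeasure q Ω))
          (𝓝[>] 1) (𝓝 0)) := by
  have hp0 : 0 < p := lt_of_lt_of_le one_pos hp
  refine ⟨2, by norm_num, ?_⟩
  intro ε hε Ω hΩc hΩL
  obtain ⟨hΩo, hΩb, -⟩ := hΩL
  have hΩm := hΩo.measurableSet
  have hε0 : 0 < ε := hε.1
  constructor
  · intro α hα hαε V hV
    exact DilAux.part1_bound hn hq hp hε0 hΩm hΩc hα hαε hV
  · intro V hV
    haveI : IsFiniteMeasure (weightedMeasure q Ω) :=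
      DilAux.isFiniteMeasure_weighted hn hε0 hΩm hΩb hΩc
    have hone : (1 : ℝ≥0∞) ≤ ENNReal.ofReal p := ENNReal.one_le_ofReal.2 hp
    rw [ENNReal.tendsto_nhds_zero]
    intro δ hδ
    set C' : ℝ≥0∞ := ENNReal.ofReal (2 * 2 ^ n) with hC'
    have hC'ne : C' + 2 ≠ ∞ := by
      rw [hC']; exact ENNReal.add_ne_top.2 ⟨ENNReal.ofReal_ne_top, by norm_num⟩
    set δ' : ℝ≥0∞ := δ / (C' + 2) with hδ'def
    have hδ'0 : δ' ≠ 0 := by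
      rw [hδ'def, Ne, ENNReal.div_eq_zero_iff]
      push_neg
      exact ⟨hδ.ne', hC'ne⟩
    obtain ⟨g, hgc, hgsub, hgcont, hgmem⟩ :=
      hV.exists_hasCompactSupport_eLpNorm_sub_le ENNReal.ofReal_ne_top hδ'0
    have hgb : ∃ M, ∀ x, ‖g x‖ ≤ M := hgc.exists_bound_of_continuous hgcont
    have htg := DilAux.part2_cont (q := q) hn hp hε0 hΩo hΩb hΩc hgcont hgb
    have hev2 : ∀ᶠ α in 𝓝[>] (1 : ℝ),
        eLpNorm (fun x => dilation Ω α g x - g x) (ENNReal.ofReal p)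
          (weightedMeasure q Ω) ≤ δ' :=
      (ENNReal.tendsto_nhds_zero.1 htg) δ' (pos_iff_ne_zero.2 hδ'0)
    have hb1 : (1 : ℝ) < min 2 (1 - ε)⁻¹ :=
      lt_min one_lt_two ((one_lt_inv₀ (by linarith [hε.2])).2 (by linarith [hε.1]))
    have hev1 : ∀ᶠ α in 𝓝[>] (1 : ℝ), α ∈ Ioo 1 (min 2 (1 - ε)⁻¹) :=
      Ioo_mem_nhdsGT_of_mem ⟨le_refl _, hb1⟩
    filter_upwards [hev1, hev2] with α hα1 hα2
    obtain ⟨hα, hαb⟩ := hα1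
    have hα0 : (0 : ℝ) < α := lt_trans one_pos hα
    have hα2' : α < 2 := lt_of_lt_of_le hαb (min_le_left _ _)
    have h1ε : (0 : ℝ) < 1 - ε := by linarith [hε.2]
    have hαinv : 1 - ε ≤ α⁻¹ := by
      rw [← one_div, le_div_iff₀ hα0]
      calc (1 - ε) * α ≤ (1 - ε) * (1 - ε)⁻¹ :=
            mul_le_mul_of_nonneg_left (le_trans hαb.le (min_le_right _ _)) h1ε.le
        _ = 1 := mul_inv_cancel₀ h1ε.ne'
    have hαε : |1 - α⁻¹| ≤ ε := by
      rw [abs_of_pos (by simp only [sub_pos]; exact inv_lt_one_of_one_lt₀ hα)]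
      linarith
    -- decomposition
    have hVg : MemLp (V - g) (ENNReal.ofReal p) (weightedMeasure q Ω) := hV.sub hgmem
    have hdecomp : (fun x => dilation Ω α V x - V x) =
        dilation Ω α (V - g) + ((fun x => dilation Ω α g x - g x) + (g - V)) := by
      funext x
      simp only [Pi.add_apply, Pi.sub_apply, dilation]
      split_ifs with h
      · rw [smul_sub]
        abel
      · abel
    have haesm1 : AEStronglyMeasurable (dilation Ω α (V - g)) (weightedMeasure q Ω) :=
      ((DilAux.stronglyMeasurable_dilation hΩm α
        hVg.1.stronglyMeasurable_mk).aestronglyMeasurable).congr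
        (DilAux.dilation_congr_ae hε0 hΩm hΩc hα0 hVg.1.ae_eq_mk).symm
    have haesm2 : AEStronglyMeasurable (fun x => dilation Ω α g x - g x)
        (weightedMeasure q Ω) :=
      ((DilAux.stronglyMeasurable_dilation hΩm α hgcont.stronglyMeasurable).sub
        hgcont.stronglyMeasurable).aestronglyMeasurable
    have haesm3 : AEStronglyMeasurable (g - V) (weightedMeasure q Ω) := hgmem.1.sub hV.1
    -- the three bounds
    have hbound1 : eLpNorm (dilation Ω α (V - g)) (ENNReal.ofReal p) (weightedMeasure q Ω)
        ≤ C' * δ' := by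
      refine le_trans (DilAux.part1_bound hn hq hp hε0 hΩm hΩc hα hαε hVg) ?_
      refine mul_le_mul' ?_ hgsub
      rw [hC']
      refine ENNReal.ofReal_le_ofReal ?_
      have hαe : α ^ ((n : ℝ) - 1 - (n : ℝ) / p) ≤ 2 ^ n := by
        rcases le_or_gt 0 ((n : ℝ) - 1 - (n : ℝ) / p) with he | he
        · calc α ^ ((n : ℝ) - 1 - (n : ℝ) / p) ≤ 2 ^ ((n : ℝ) - 1 - (n : ℝ) / p) :=
              Real.rpow_le_rpow hα0.le hα2'.le he
            _ ≤ 2 ^ ((n : ℕ) : ℝ) := Real.rpow_le_rpow_of_exponent_le one_le_two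
                (by
                  have : (0 : ℝ) ≤ (n : ℝ) / p := div_nonneg (Nat.cast_nonneg n) hp0.le
                  linarith)
            _ = 2 ^ n := Real.rpow_natCast 2 n
        · calc α ^ ((n : ℝ) - 1 - (n : ℝ) / p) ≤ 1 :=
              Real.rpow_le_one_of_one_le_of_nonpos hα.le he.le
            _ ≤ 2 ^ n := one_le_pow₀ one_le_two
      linarith
    have hbound3 : eLpNorm (g - V) (ENNReal.ofReal p) (weightedMeasure q Ω) ≤ δ' := by
      rw [eLpNorm_sub_comm]
      exact hgsub
    calc eLpNorm (fun x => dilation Ω α V x - V x) (ENNReal.ofReal p) (weightedMeasure q Ω)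
        = eLpNorm (dilation Ω α (V - g) + ((fun x => dilation Ω α g x - g x) + (g - V)))
            (ENNReal.ofReal p) (weightedMeasure q Ω) := by rw [hdecomp]
      _ ≤ eLpNorm (dilation Ω α (V - g)) (ENNReal.ofReal p) (weightedMeasure q Ω) +
            eLpNorm ((fun x => dilation Ω α g x - g x) + (g - V)) (ENNReal.ofReal p)
              (weightedMeasure q Ω) :=
          eLpNorm_add_le haesm1 (haesm2.add haesm3) hone
      _ ≤ eLpNorm (dilation Ω α (V - g)) (ENNReal.ofReal p) (weightedMeasure q Ω) +
            (eLpNorm (fun x => dilation Ω α g x - g x) (ENNReal.ofReal p)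
                (weightedMeasure q Ω) +
              eLpNorm (g - V) (ENNReal.ofReal p) (weightedMeasure q Ω)) :=
          add_le_add_right (eLpNorm_add_le haesm2 haesm3 hone) _
      _ ≤ C' * δ' + (δ' + δ') := by
          exact add_le_add hbound1 (add_le_add hα2 hbound3)
      _ = (C' + 2) * δ' := by ring
      _ ≤ δ := by
          rw [hδ'def]
          exact ENNReal.mul_div_le
end
end
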